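/- arXiv:2404.14614 — 6 statements merged into one kernel-verified Lean document; each statement's English description precedes it below -/
import Mathlib

section
/- If x, y ∈ K satisfy ‖x‖ > 1/√‖a‖ and ‖y‖ > 1/√‖a‖, then ‖R(x) − R(y)‖ = ‖x − y‖. Consequently, if the open disk D_r(x) is disjoint from the closed ball {z : ‖z‖ ≤ 1/√‖a‖}, then R(D_r(x)) = D_r(R(x)), i.e. R is an isometry there. -/
open IsUltrametricDist in
private lemma norm_sub_eq_left_of_norm_lt {K : Type*} [NormedField K] [IsUltrametricDist K]
    {u v : K} (h : ‖v‖ < ‖u‖) : ‖u - v‖ = ‖u‖ := by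
  rw [sub_eq_add_neg, norm_add_eq_max_of_norm_ne_norm (by rw [norm_neg]; exact h.ne'),
    norm_neg, max_eq_left h.le]

set_option maxHeartbeats 1000000 in
/-- If `‖x‖, ‖y‖ > 1/√‖a‖` then `‖R x - R y‖ = ‖x - y‖`; consequently
if the open disk `D_r(x)` is disjoint from the closed ball `{‖z‖ ≤ 1/√‖a‖}` then
`R(D_r(x)) = D_r(R x)`, i.e. `R` is an isometry there. -/
theorem quadratic_rational_isometry_far_from_ball
    {K : Type*} [NormedField K] [CompleteSpace K] [IsAlgClosed K] [IsUltrametricDist K]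
    (a b : K) (ha : 1 < ‖a‖) (hb : ‖b‖ = 1)
    (R : K → K) (hR : ∀ z, R z = (z ^ 2 - z) / (b * z - 1 / a)) :
    (∀ x y : K, 1 / Real.sqrt ‖a‖ < ‖x‖ → 1 / Real.sqrt ‖a‖ < ‖y‖ →
        ‖R x - R y‖ = ‖x - y‖) ∧
    (∀ (x : K) (r : ℝ), 0 < r →
        Disjoint (Metric.ball x r) (Metric.closedBall (0 : K) (1 / Real.sqrt ‖a‖)) →
        R '' Metric.ball x r = Metric.ball (R x) r) := by
  set s : ℝ := Real.sqrt ‖a‖ with hs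
  have hs2 : s ^ 2 = ‖a‖ := Real.sq_sqrt (norm_nonneg a)
  have hs1 : 1 < s := by nlinarith [Real.sqrt_nonneg ‖a‖]
  have hs0 : 0 < s := by linarith
  have ha0 : a ≠ 0 := by intro h; rw [h, norm_zero] at ha; linarith
  have hinva : ‖1 / a‖ = 1 / s ^ 2 := by rw [norm_div, norm_one, hs2]
  -- basic consequences of `1/s < ‖z‖`
  have hz0 : ∀ z : K, 1 / s < ‖z‖ → 0 < ‖z‖ := fun z hz => lt_trans (by positivity) hz
  have hzs : ∀ z : K, 1 / s < ‖z‖ → 1 < ‖z‖ * s := fun z hz => (div_lt_iff₀ hs0).mp hz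
  have hden : ∀ z : K, 1 / s < ‖z‖ → ‖b * z - 1 / a‖ = ‖z‖ := by
    intro z hz
    have h1 : ‖1 / a‖ < ‖b * z‖ := by
      rw [hinva, norm_mul, hb, one_mul]
      have := hzs z hz
      rw [div_lt_iff₀ (by positivity)]
      nlinarith
    rw [norm_sub_eq_left_of_norm_lt h1, norm_mul, hb, one_mul]
  have hdne : ∀ z : K, 1 / s < ‖z‖ → b * z - 1 / a ≠ 0 := by
    intro z hz
    rw [← norm_pos_iff, hden z hz]; exact hz0 z hz
  -- Part 1
  have key : ∀ x y : K, 1 / s < ‖x‖ → 1 / s < ‖y‖ → ‖R x - R y‖ = ‖x - y‖ := by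
    intro x y hx hy
    have hgx := hdne x hx
    have hgy := hdne y hy
    have hnum_eq : (x ^ 2 - x) * (b * y - 1 / a) - (b * x - 1 / a) * (y ^ 2 - y) =
        (x - y) * (b * (x * y) - (x + y - 1) / a) := by
      field_simp
      ring
    have hsub : R x - R y =
        ((x - y) * (b * (x * y) - (x + y - 1) / a)) / ((b * x - 1 / a) * (b * y - 1 / a)) := by
      rw [hR, hR, div_sub_div _ _ hgx hgy, hnum_eq]
    have hnum : ‖b * (x * y) - (x + y - 1) / a‖ = ‖x‖ * ‖y‖ := by
      have hle : ‖x + y - 1‖ ≤ max (max ‖x‖ ‖y‖) 1 := by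
        calc ‖x + y - 1‖ = ‖(x + y) + (-1)‖ := by ring_nf
          _ ≤ max ‖x + y‖ ‖(-1 : K)‖ := IsUltrametricDist.norm_add_le_max _ _
          _ ≤ max (max ‖x‖ ‖y‖) 1 := by
              rw [norm_neg, norm_one]
              exact max_le_max (IsUltrametricDist.norm_add_le_max _ _) le_rfl
      have hlt : ‖(x + y - 1) / a‖ < ‖b * (x * y)‖ := by
        rw [norm_div, norm_mul, hb, one_mul, norm_mul,
          div_lt_iff₀ (by positivity : (0:ℝ) < ‖a‖)]
        refine lt_of_le_of_lt hle ?_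
        have h1 := hzs x hx
        have h2 := hzs y hy
        have h3 := hz0 x hx
        have h4 := hz0 y hy
        rw [max_lt_iff, max_lt_iff, ← hs2]
        refine ⟨⟨?_, ?_⟩, ?_⟩ <;> nlinarith
      rw [norm_sub_eq_left_of_norm_lt hlt, norm_mul, hb, one_mul, norm_mul]
    rw [hsub, norm_div, norm_mul, hnum, norm_mul, hden x hx, hden y hy,
      mul_div_assoc, div_self (ne_of_gt (mul_pos (hz0 x hx) (hz0 y hy))), mul_one]
  refine ⟨key, ?_⟩
  -- Part 2
  intro x r hr hdisj
  have hball : ∀ z ∈ Metric.ball x r, 1 / s < ‖z‖ := by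
    intro z hz
    by_contra h
    push_neg at h
    exact Set.disjoint_left.mp hdisj hz (by simpa [Metric.mem_closedBall, dist_zero_right] using h)
  have hx : 1 / s < ‖x‖ := hball x (Metric.mem_ball_self hr)
  have hrx : r ≤ ‖x‖ := by
    have h0 : (0 : K) ∈ Metric.closedBall (0 : K) (1 / s) :=
      Metric.mem_closedBall_self (by positivity)
    have h1 := Set.disjoint_right.mp hdisj h0
    rw [Metric.mem_ball, dist_zero_left, not_lt] at h1
    exact h1
  -- relation for x
  have hgx := hdne x hx
  have hxR : R x * (b * x - 1 / a) = x ^ 2 - x := by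
    rw [hR x, div_mul_cancel₀ _ hgx]
  -- the "other preimage" of R x is small
  have hxp : ‖1 + R x * b - x‖ ≤ 1 / s := by
    have h1a : a * (1 / a) = 1 := by
      field_simp
    have hmul : x * (1 + R x * b - x) * a = R x := by
      linear_combination a * hxR + R x * h1a
    have hn1 : ‖x‖ * ‖1 + R x * b - x‖ * ‖a‖ = ‖R x‖ := by
      rw [← norm_mul, ← norm_mul, hmul]
    have hRxn : ‖R x‖ = ‖x‖ * ‖1 + R x * b - x‖ * s ^ 2 := by
      rw [hs2]; exact hn1.symm
    have hn2 : ‖R x‖ * ‖x‖ = ‖x ^ 2 - x‖ := by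
      rw [← hden x hx, ← norm_mul, hxR]
    have hn3 : ‖x ^ 2 - x‖ ≤ max (‖x‖ ^ 2) ‖x‖ := by
      calc ‖x ^ 2 - x‖ = ‖x ^ 2 + (-x)‖ := by ring_nf
        _ ≤ max ‖x ^ 2‖ ‖(-x)‖ := IsUltrametricDist.norm_add_le_max _ _
        _ = max (‖x‖ ^ 2) ‖x‖ := by rw [norm_neg, norm_pow]
      ;
    have hX0 := hz0 x hx
    have hXs := hzs x hx
    rw [le_div_iff₀ hs0]
    have hkey : ‖x‖ * ‖1 + R x * b - x‖ * s ^ 2 * ‖x‖ ≤ max (‖x‖ ^ 2) ‖x‖ := by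
      rw [← hRxn, hn2]; exact hn3
    rcases le_total ‖x‖ 1 with hc | hc
    · have hmax : max (‖x‖ ^ 2) ‖x‖ = ‖x‖ := max_eq_right (by nlinarith)
      rw [hmax] at hkey
      have e2 : ‖x‖ * ‖1 + R x * b - x‖ * s ^ 2 ≤ 1 := by nlinarith
      nlinarith [norm_nonneg (1 + R x * b - x), hXs, e2, hs0, hX0]
    · have hmax : max (‖x‖ ^ 2) ‖x‖ = ‖x‖ ^ 2 := max_eq_left (by nlinarith)
      rw [hmax] at hkey
      have e2 : ‖1 + R x * b - x‖ * s ^ 2 ≤ 1 := by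
        nlinarith [mul_pos hX0 hX0]
      have e3 : ‖1 + R x * b - x‖ * s ≤ ‖1 + R x * b - x‖ * s ^ 2 :=
        mul_le_mul_of_nonneg_left (by nlinarith) (norm_nonneg _)
      linarith
  ext w
  simp only [Set.mem_image, Metric.mem_ball]
  constructor
  · rintro ⟨z, hz, rfl⟩
    rw [dist_eq_norm, key z x (hball z hz) hx, ← dist_eq_norm]
    exact hz
  · intro hw
    rw [dist_eq_norm] at hw
    -- find a root of z^2 - (1 + w*b) z + w/a
    obtain ⟨z, hzr⟩ : ∃ z : K, z ^ 2 - (1 + w * b) * z + w / a = 0 := by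
      obtain ⟨z, hz⟩ := IsAlgClosed.exists_root
        (Polynomial.C 1 * Polynomial.X ^ 2 + Polynomial.C (-(1 + w * b)) * Polynomial.X
          + Polynomial.C (w / a))
        (by rw [Polynomial.degree_quadratic one_ne_zero]; exact (by norm_num))
      rw [Polynomial.IsRoot.def] at hz
      simp only [Polynomial.eval_add, Polynomial.eval_mul, Polynomial.eval_pow,
        Polynomial.eval_C, Polynomial.eval_X, one_mul] at hz
      exact ⟨z, by linear_combination hz⟩
    set z₂ : K := (1 + w * b) - z with hz2
    have hz2r : z₂ ^ 2 - (1 + w * b) * z₂ + w / a = 0 := by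
      rw [hz2]; linear_combination hzr
    -- one of the roots is big
    have hbig : 1 / s < ‖z‖ ∨ 1 / s < ‖z₂‖ := by
      by_contra h
      push_neg at h
      obtain ⟨h1, h2⟩ := h
      have hEq : z + z₂ + -(b * (w - R x)) + -(1 + R x * b - x) = x := by
        rw [hz2]; ring
      have hle' : ‖z + z₂ + -(b * (w - R x)) + -(1 + R x * b - x)‖ ≤
          max (max (max ‖z‖ ‖z₂‖) ‖b * (w - R x)‖) ‖1 + R x * b - x‖ := by
        refine le_trans (IsUltrametricDist.norm_add_le_max _ _) ?_
        rw [norm_neg]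
        refine max_le_max ?_ le_rfl
        refine le_trans (IsUltrametricDist.norm_add_le_max _ _) ?_
        rw [norm_neg]
        exact max_le_max (IsUltrametricDist.norm_add_le_max _ _) le_rfl
      rw [hEq] at hle'
      have hle := hle'
      have hlt : max (max (max ‖z‖ ‖z₂‖) ‖b * (w - R x)‖) ‖1 + R x * b - x‖ < ‖x‖ := by
        refine max_lt (max_lt (max_lt (lt_of_le_of_lt h1 hx) (lt_of_le_of_lt h2 hx)) ?_)
          (lt_of_le_of_lt hxp hx)
        rw [norm_mul, hb, one_mul]
        exact lt_of_lt_of_le hw hrx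
      exact absurd (lt_of_le_of_lt hle hlt) (lt_irrefl _)
    obtain ⟨ζ, hζb, hζr⟩ : ∃ ζ : K, 1 / s < ‖ζ‖ ∧ ζ ^ 2 - (1 + w * b) * ζ + w / a = 0 :=
      hbig.elim (fun h => ⟨z, h, hzr⟩) (fun h => ⟨z₂, h, hz2r⟩)
    have hζR : R ζ = w := by
      rw [hR, div_eq_iff (hdne ζ hζb)]
      linear_combination hζr
    refine ⟨ζ, ?_, hζR⟩
    rw [dist_eq_norm, ← key ζ x hζb hx, hζR]
    exact hw
end

section
/- If x, y ∈ K satisfy ‖x‖ ≤ 1/‖a‖, ‖y‖ ≤ 1/‖a‖, ‖x − 1/(ab)‖ ≥ 1/‖a‖ and ‖y − 1/(ab)‖ ≥ 1/‖a‖, then ‖R(x) − R(y)‖ = ‖a‖·‖x − y‖. Moreover, if D_r(x) ⊆ D_{1/‖a‖}(0) then R(D_r(x)) = D_{‖a‖r}(R(x)). -/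
open IsUltrametricDist in
private lemma ultra_sub_le_max {K : Type*} [NormedField K] [IsUltrametricDist K] (u v : K) :
    ‖u - v‖ ≤ max ‖u‖ ‖v‖ := by
  rw [sub_eq_add_neg]
  simpa using norm_add_le_max u (-v)

open IsUltrametricDist in
private lemma ultra_sub_eq_right {K : Type*} [NormedField K] [IsUltrametricDist K] {u v : K}
    (h : ‖u‖ < ‖v‖) : ‖u - v‖ = ‖v‖ := by
  have h2 := norm_add_eq_max_of_norm_ne_norm (x := u) (y := -v) (by simpa using h.ne)
  rw [← sub_eq_add_neg] at h2
  rw [h2, norm_neg]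
  exact max_eq_right h.le

/-- If `‖x‖, ‖y‖ ≤ 1/‖a‖` and `‖x - 1/(ab)‖, ‖y - 1/(ab)‖ ≥ 1/‖a‖`
then `‖R x - R y‖ = ‖a‖·‖x - y‖`; moreover if `D_r(x) ⊆ D_{1/‖a‖}(0)` then
`R(D_r(x)) = D_{‖a‖ r}(R x)`. -/
theorem quadratic_rational_expanding_near_zero
    {K : Type*} [NormedField K] [CompleteSpace K] [IsAlgClosed K] [IsUltrametricDist K]
    (a b : K) (ha : 1 < ‖a‖) (hb : ‖b‖ = 1)
    (R : K → K) (hR : ∀ z, R z = (z ^ 2 - z) / (b * z - 1 / a)) :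
    (∀ x y : K, ‖x‖ ≤ 1 / ‖a‖ → ‖y‖ ≤ 1 / ‖a‖ →
        1 / ‖a‖ ≤ ‖x - 1 / (a * b)‖ → 1 / ‖a‖ ≤ ‖y - 1 / (a * b)‖ →
        ‖R x - R y‖ = ‖a‖ * ‖x - y‖) ∧
    (∀ (x : K) (r : ℝ), 0 < r →
        Metric.ball x r ⊆ Metric.ball (0 : K) (1 / ‖a‖) →
        R '' Metric.ball x r = Metric.ball (R x) (‖a‖ * r)) := by
  have ha0 : (0 : ℝ) < ‖a‖ := lt_trans one_pos ha
  have haz : a ≠ 0 := by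
    intro h; rw [h, norm_zero] at ha0; exact lt_irrefl 0 ha0
  have hbz : b ≠ 0 := by
    intro h; rw [h, norm_zero] at hb; exact one_ne_zero hb.symm
  have hinv : ‖(1 : K) / a‖ = 1 / ‖a‖ := by rw [norm_div, norm_one]
  have hinvab : ‖(1 : K) / (a * b)‖ = 1 / ‖a‖ := by
    rw [norm_div, norm_one, norm_mul, hb, mul_one]
  have hinv_lt_one : 1 / ‖a‖ < 1 := by
    rw [div_lt_one ha0]; exact ha
  have hinv_pos : (0 : ℝ) < 1 / ‖a‖ := by positivity
  -- norm of denominator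
  have hden : ∀ z : K, ‖z‖ ≤ 1 / ‖a‖ → 1 / ‖a‖ ≤ ‖z - 1 / (a * b)‖ →
      ‖b * z - 1 / a‖ = 1 / ‖a‖ := by
    intro z hz hz'
    have hfac : b * z - 1 / a = b * (z - 1 / (a * b)) := by
      field_simp
    rw [hfac, norm_mul, hb, one_mul]
    refine le_antisymm ?_ hz'
    calc ‖z - 1 / (a * b)‖ ≤ max ‖z‖ ‖(1 : K) / (a * b)‖ := ultra_sub_le_max _ _
      _ ≤ 1 / ‖a‖ := by rw [hinvab]; exact max_le hz le_rfl
  have hdenz : ∀ z : K, ‖b * z - 1 / a‖ = 1 / ‖a‖ → b * z - 1 / a ≠ 0 := by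
    intro z hz h
    rw [h, norm_zero] at hz
    exact absurd hz.symm (ne_of_gt hinv_pos)
  -- Part 1
  have part1 : ∀ x y : K, ‖x‖ ≤ 1 / ‖a‖ → ‖y‖ ≤ 1 / ‖a‖ →
      1 / ‖a‖ ≤ ‖x - 1 / (a * b)‖ → 1 / ‖a‖ ≤ ‖y - 1 / (a * b)‖ →
      ‖R x - R y‖ = ‖a‖ * ‖x - y‖ := by
    intro x y hx hy hx' hy'
    have hdx := hden x hx hx'
    have hdy := hden y hy hy'
    have hdxz := hdenz x hdx
    have hdyz := hdenz y hdy
    have hkey : R x - R y =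
        ((x - y) * (b * x * y - (x + y - 1) / a)) / ((b * x - 1 / a) * (b * y - 1 / a)) := by
      rw [hR, hR, div_sub_div _ _ hdxz hdyz]
      congr 1
      ring
    -- middle factor norm
    have hmid : ‖b * x * y - (x + y - 1) / a‖ = 1 / ‖a‖ := by
      have h1 : ‖x + y - 1‖ = 1 := by
        have hxy : ‖x + y‖ < 1 := by
          calc ‖x + y‖ ≤ max ‖x‖ ‖y‖ := IsUltrametricDist.norm_add_le_max x y
            _ ≤ 1 / ‖a‖ := max_le hx hy
            _ < 1 := hinv_lt_one
        have := ultra_sub_eq_right (u := x + y) (v := (1 : K)) (by simpa using hxy)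
        simpa using this
      have h2 : ‖(x + y - 1) / a‖ = 1 / ‖a‖ := by
        rw [norm_div, h1]
      have h3 : ‖b * x * y‖ < 1 / ‖a‖ := by
        have : ‖b * x * y‖ = ‖x‖ * ‖y‖ := by
          rw [norm_mul, norm_mul, hb, one_mul]
        rw [this]
        calc ‖x‖ * ‖y‖ ≤ (1 / ‖a‖) * ‖y‖ := by
              apply mul_le_mul_of_nonneg_right hx (norm_nonneg y)
          _ ≤ (1 / ‖a‖) * (1 / ‖a‖) := by
              apply mul_le_mul_of_nonneg_left hy (le_of_lt hinv_pos)
          _ < 1 * (1 / ‖a‖) := by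
              apply mul_lt_mul_of_pos_right hinv_lt_one hinv_pos
          _ = 1 / ‖a‖ := one_mul _
      rw [ultra_sub_eq_right (by rw [h2]; exact h3), h2]
    rw [hkey, norm_div, norm_mul, norm_mul, hmid, hdx, hdy]
    field_simp
  refine ⟨part1, ?_⟩
  -- Part 2
  intro x r hr hsub
  -- x is in the ball
  have hxball : x ∈ Metric.ball (0 : K) (1 / ‖a‖) :=
    hsub (Metric.mem_ball_self hr)
  have hxnorm : ‖x‖ < 1 / ‖a‖ := by
    simpa [dist_eq_norm] using hxball
  -- r ≤ 1/‖a‖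
  have hrle : r ≤ 1 / ‖a‖ := by
    by_contra h
    push_neg at h
    have hmem : (1 / a : K) ∈ Metric.ball x r := by
      rw [Metric.mem_ball, dist_eq_norm]
      calc ‖1 / a - x‖ ≤ max ‖(1 : K) / a‖ ‖x‖ := ultra_sub_le_max _ _
        _ ≤ 1 / ‖a‖ := by rw [hinv]; exact max_le le_rfl hxnorm.le
        _ < r := h
    have := hsub hmem
    rw [Metric.mem_ball, dist_eq_norm, sub_zero, hinv] at this
    exact lt_irrefl _ this
  -- key: any z of norm < 1/‖a‖ satisfies the part-1 hypotheses
  have hhyp : ∀ z : K, ‖z‖ < 1 / ‖a‖ → 1 / ‖a‖ ≤ ‖z - 1 / (a * b)‖ := by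
    intro z hz
    rw [ultra_sub_eq_right (by rw [hinvab]; exact hz), hinvab]
  have hball_norm : ∀ z ∈ Metric.ball x r, ‖z‖ < 1 / ‖a‖ := by
    intro z hz
    have := hsub hz
    simpa [dist_eq_norm] using this
  ext w
  constructor
  · rintro ⟨z, hz, rfl⟩
    have hzn := hball_norm z hz
    have := part1 z x hzn.le hxnorm.le (hhyp z hzn) (hhyp x hxnorm)
    rw [Metric.mem_ball, dist_eq_norm, this]
    rw [Metric.mem_ball, dist_eq_norm] at hz
    exact mul_lt_mul_of_pos_left hz ha0
  · intro hw
    rw [Metric.mem_ball, dist_eq_norm] at hw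
    -- ‖R x‖ < 1
    have hdx := hden x hxnorm.le (hhyp x hxnorm)
    have hdxz := hdenz x hdx
    have hx2 : ‖x ^ 2 - x‖ ≤ ‖x‖ := by
      refine (ultra_sub_le_max _ _).trans (max_le ?_ le_rfl)
      rw [norm_pow]
      nlinarith [norm_nonneg x, hxnorm.le.trans hinv_lt_one.le]
    have hRx : ‖R x‖ < 1 := by
      rw [hR, norm_div, hdx, div_lt_one hinv_pos]
      exact lt_of_le_of_lt hx2 hxnorm
    -- ‖w‖ < 1
    have hww : ‖w‖ < 1 := by
      have h1 : ‖w - R x‖ < 1 := by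
        calc ‖w - R x‖ < ‖a‖ * r := hw
          _ ≤ ‖a‖ * (1 / ‖a‖) := by
              exact mul_le_mul_of_nonneg_left hrle ha0.le
          _ = 1 := by field_simp
      calc ‖w‖ = ‖(w - R x) + R x‖ := by ring_nf
        _ ≤ max ‖w - R x‖ ‖R x‖ := IsUltrametricDist.norm_add_le_max _ _
        _ < 1 := max_lt h1 hRx
    -- ‖1 + b w‖ = 1
    have hbw : ‖b * w‖ < 1 := by rw [norm_mul, hb, one_mul]; exact hww
    have h1bw : ‖1 + b * w‖ = 1 := by
      have := ultra_sub_eq_right (u := b * w) (v := (-1 : K)) (by simpa using hbw)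
      rw [sub_neg_eq_add] at this
      rw [add_comm]
      simpa using this
    -- quadratic relation from Vieta data
    have hQ : ∀ u v : K, u + v = 1 + b * w → u * v = w / a →
        u ^ 2 - u = w * (b * u - 1 / a) := by
      intro u v h1 h2
      linear_combination u * h1 - h2
    -- main construction given ordered roots
    have hfinal : ∀ u v : K, u + v = 1 + b * w → u * v = w / a → ‖u‖ ≤ ‖v‖ →
        w ∈ R '' Metric.ball x r := by
      intro u v h1 h2 huv
      have hv1 : (1 : ℝ) ≤ ‖v‖ := by
        have : (1 : ℝ) = ‖u + v‖ := by rw [h1, h1bw]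
        calc (1 : ℝ) = ‖u + v‖ := this
          _ ≤ max ‖u‖ ‖v‖ := IsUltrametricDist.norm_add_le_max _ _
          _ = ‖v‖ := max_eq_right huv
      have hu : ‖u‖ < 1 / ‖a‖ := by
        calc ‖u‖ = ‖u‖ * 1 := (mul_one _).symm
          _ ≤ ‖u‖ * ‖v‖ := mul_le_mul_of_nonneg_left hv1 (norm_nonneg u)
          _ = ‖u * v‖ := (norm_mul u v).symm
          _ = ‖w‖ / ‖a‖ := by rw [h2, norm_div]
          _ < 1 / ‖a‖ := by
              gcongr
      have hRu : R u = w := by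
        rw [hR, div_eq_iff (hdenz u (hden u hu.le (hhyp u hu)))]
        exact hQ u v h1 h2
      have heq := part1 u x hu.le hxnorm.le (hhyp u hu) (hhyp x hxnorm)
      rw [hRu] at heq
      have hur : ‖u - x‖ < r := by
        rw [heq] at hw
        exact lt_of_mul_lt_mul_left hw ha0.le
      exact ⟨u, by rw [Metric.mem_ball, dist_eq_norm]; exact hur, hRu⟩
    -- produce the roots
    obtain ⟨z, hz0⟩ := IsAlgClosed.exists_root
      (p := Polynomial.C 1 * Polynomial.X ^ 2 + Polynomial.C (-(1 + b * w)) * Polynomial.X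
        + Polynomial.C (w / a))
      (by rw [Polynomial.degree_quadratic one_ne_zero]; decide)
    have hz : z ^ 2 - (1 + b * w) * z + w / a = 0 := by
      have h := hz0
      simp only [Polynomial.IsRoot, Polynomial.eval_add, Polynomial.eval_mul,
        Polynomial.eval_pow, Polynomial.eval_C, Polynomial.eval_X, one_mul] at h
      linear_combination h
    have hsum : z + (1 + b * w - z) = 1 + b * w := by ring
    have hprod : z * (1 + b * w - z) = w / a := by linear_combination -hz
    rcases le_total ‖z‖ ‖(1 + b * w - z)‖ with h | h
    · exact hfinal z (1 + b * w - z) hsum hprod h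
    · exact hfinal (1 + b * w - z) z (by linear_combination hsum) (by linear_combination hprod) h
end

section
/- If z ∈ K satisfies ‖z − 1‖ < 1/√2, then ‖R_b(z) − R_β(z)‖ = ‖z − 1‖·‖b − β‖. -/
lemma ultra_add_eq {K : Type*} [NormedField K] [IsUltrametricDist K]
    {x y : K} (h : ‖y‖ < ‖x‖) : ‖x + y‖ = ‖x‖ := by
  rw [IsUltrametricDist.norm_add_eq_max_of_norm_ne_norm (by linarith [h] : ‖x‖ ≠ ‖y‖)]
  exact max_eq_left h.le

/-- If `‖z − 1‖ < 1/√2` then `‖R_b(z) − R_β(z)‖ = ‖z − 1‖·‖b − β‖`. -/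
theorem parameter_distance_near_one
    {K : Type*} [NormedField K] [CompleteSpace K] [IsAlgClosed K] [IsUltrametricDist K]
    (a b β : K) (ha : 1 < ‖a‖) (hb : ‖b‖ = 1) (hβ : ‖β‖ = 1)
    (Rb Rβ : K → K)
    (hRb : ∀ z, Rb z = (z ^ 2 - z) / (b * z - 1 / a))
    (hRβ : ∀ z, Rβ z = (z ^ 2 - z) / (β * z - 1 / a))
    (z : K) (hz : ‖z - 1‖ < 1 / Real.sqrt 2) :
    ‖Rb z - Rβ z‖ = ‖z - 1‖ * ‖b - β‖ := by
  have ha0 : a ≠ 0 := by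
    intro h; rw [h, norm_zero] at ha; linarith
  have hinva : ‖1 / a‖ < 1 := by
    rw [norm_div, norm_one, div_lt_one (by linarith)]; exact ha
  have hz1 : ‖z - 1‖ < 1 := by
    refine hz.trans_le ?_
    rw [div_le_one (Real.sqrt_pos.mpr (by norm_num))]
    nlinarith [Real.sq_sqrt (by norm_num : (2:ℝ) ≥ 0), Real.sqrt_nonneg 2]
  have hznorm : ‖z‖ = 1 := by
    have : ‖(1 : K) + (z - 1)‖ = ‖(1 : K)‖ := ultra_add_eq (by rwa [norm_one])
    simpa using this
  have hbz : ‖b * z - 1 / a‖ = 1 := by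
    have : ‖b * z + (-(1 / a))‖ = ‖b * z‖ := by
      apply ultra_add_eq
      rw [norm_neg, norm_mul, hb, hznorm, mul_one]; exact hinva
    rw [← sub_eq_add_neg] at this
    rw [this, norm_mul, hb, hznorm, mul_one]
  have hβz : ‖β * z - 1 / a‖ = 1 := by
    have : ‖β * z + (-(1 / a))‖ = ‖β * z‖ := by
      apply ultra_add_eq
      rw [norm_neg, norm_mul, hβ, hznorm, mul_one]; exact hinva
    rw [← sub_eq_add_neg] at this
    rw [this, norm_mul, hβ, hznorm, mul_one]
  have hbz0 : b * z - 1 / a ≠ 0 := by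
    intro h; rw [h, norm_zero] at hbz; norm_num at hbz
  have hβz0 : β * z - 1 / a ≠ 0 := by
    intro h; rw [h, norm_zero] at hβz; norm_num at hβz
  have key : Rb z - Rβ z = ((z ^ 2 * (z - 1)) * (β - b)) / ((b * z - 1 / a) * (β * z - 1 / a)) := by
    rw [hRb, hRβ, div_sub_div _ _ hbz0 hβz0]
    congr 1
    ring
  rw [key, norm_div, norm_mul, norm_mul, norm_mul, norm_pow, hbz, hβz, hznorm, norm_sub_rev β b]
  ring
end

section
/- For every β ∈ K with ‖β − b₁‖ < 1/(4√2) and every critical point c of R_β (i.e. every root c of βz² − (2/a)z + 1/a), one has ‖c − c₁‖ ≤ 1/(2√2); equivalently, the closed balls B_{1/(2√2)}(c) and B_{1/(2√2)}(c₁) coincide. -/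
set_option maxHeartbeats 800000


/-- For every `β` with `‖β − b₁‖ < 1/(4√2)` and every critical point `c`
of `R_β` (root of `βz² − (2/a)z + 1/a`), one has `‖c − c₁‖ ≤ 1/(2√2)`. -/
theorem critical_points_stay_in_ball
    {K : Type*} [NormedField K] [CompleteSpace K] [IsAlgClosed K] [IsUltrametricDist K]
    (h2 : ‖(2 : K)‖ = 1 / 2)
    (a b₁ c₁ : K) (ha : ‖a‖ = 2) (hb₁ : ‖b₁‖ = 1)
    (R : K → K → K) (hRdef : ∀ β z, R β z = (z ^ 2 - z) / (β * z - 1 / a))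
    (hc₁ : b₁ * c₁ ^ 2 - (2 / a) * c₁ + 1 / a = 0)
    (hper : (R b₁)^[3] '' Metric.closedBall c₁ (1 / (2 * Real.sqrt 2)) =
      Metric.closedBall c₁ (1 / (2 * Real.sqrt 2))) :
    ∀ β c : K, ‖β - b₁‖ < 1 / (4 * Real.sqrt 2) →
      β * c ^ 2 - (2 / a) * c + 1 / a = 0 →
      ‖c - c₁‖ ≤ 1 / (2 * Real.sqrt 2) := by
  intro β c hβ hc
  have usub : ∀ x y : K, ‖x - y‖ ≤ max ‖x‖ ‖y‖ := by
    intro x y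
    have := IsUltrametricDist.norm_add_le_max x (-y)
    simpa [sub_eq_add_neg] using this
  have hs2 : Real.sqrt 2 ^ 2 = 2 := Real.sq_sqrt (by norm_num)
  have hs1 : 1 ≤ Real.sqrt 2 := by nlinarith [Real.sqrt_nonneg 2]
  have hs0 : (0:ℝ) < Real.sqrt 2 := by linarith
  set u : ℝ := 1 / Real.sqrt 2 with hu_def
  have hu0 : 0 < u := by positivity
  have hu2 : u ^ 2 = 1 / 2 := by rw [hu_def, div_pow, hs2]; norm_num
  have hu1 : u ≤ 1 := by rw [hu_def, div_le_one hs0]; exact hs1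
  have e4 : (1:ℝ) / (4 * Real.sqrt 2) = u / 4 := by rw [hu_def]; ring
  have e2 : (1:ℝ) / (2 * Real.sqrt 2) = u / 2 := by rw [hu_def]; ring
  rw [e4] at hβ
  rw [e2]
  have ha0 : a ≠ 0 := by
    intro h; rw [h, norm_zero] at ha; norm_num at ha
  have hb0 : b₁ ≠ 0 := by
    intro h; rw [h, norm_zero] at hb₁; norm_num at hb₁
  have hna : ‖(1:K)/a‖ = 1/2 := by rw [norm_div, norm_one, ha]
  have hn2a : ‖(2:K)/a‖ = 1/4 := by rw [norm_div, h2, ha]; norm_num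
  -- any root of γ z² - (2/a) z + 1/a with ‖γ‖ = 1 has norm ≤ u
  have key : ∀ γ x : K, ‖γ‖ = 1 → γ * x ^ 2 - (2/a) * x + 1/a = 0 → ‖x‖ ≤ u := by
    intro γ x hγ hx
    have hx' : γ * x ^ 2 = (2/a) * x - 1/a := by linear_combination hx
    have h1 : ‖γ * x ^ 2‖ ≤ max ‖(2/a) * x‖ ‖(1:K)/a‖ := by
      rw [hx']; exact usub _ _
    rw [norm_mul, norm_pow, hγ, one_mul, norm_mul, hn2a, hna] at h1
    rcases le_total ((1:ℝ)/4 * ‖x‖) (1/2) with h' | h'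
    · rw [max_eq_right h'] at h1
      nlinarith [norm_nonneg x]
    · rw [max_eq_left h'] at h1
      nlinarith [norm_nonneg x]
  -- ‖β‖ = 1
  have hβ1 : ‖β‖ = 1 := by
    have hne : ‖b₁‖ ≠ ‖β - b₁‖ := by rw [hb₁]; nlinarith
    have := IsUltrametricDist.norm_add_eq_max_of_norm_ne_norm hne
    have e : b₁ + (β - b₁) = β := by ring
    rw [e, hb₁] at this
    rw [this, max_eq_left]
    nlinarith
  have hcnorm : ‖c‖ ≤ u := key β c hβ1 hc
  have hc₁norm : ‖c₁‖ ≤ u := key b₁ c₁ hb₁ hc₁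
  -- the other root of the b₁ quadratic
  set c₂ : K := 2 / (a * b₁) - c₁ with hc₂def
  have hc₁'' : a * b₁ * c₁ ^ 2 - 2 * c₁ + 1 = 0 := by
    have h := hc₁
    field_simp at h
    linear_combination h
  have hfac : b₁ * c ^ 2 - (2/a) * c + 1/a = b₁ * (c - c₁) * (c - c₂) := by
    rw [hc₂def]
    field_simp
    ring_nf
    linear_combination hc₁''
  -- ‖c₂ - c₁‖ ≤ u/2
  have hd : ‖c₂ - c₁‖ ≤ u / 2 := by
    have e : c₂ - c₁ = 2/(a*b₁) - 2 * c₁ := by rw [hc₂def]; ring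
    have h1 : ‖(2:K)/(a*b₁)‖ = 1/4 := by
      rw [norm_div, norm_mul, h2, ha, hb₁]; norm_num
    have h2c : ‖(2:K) * c₁‖ ≤ u / 2 := by
      rw [norm_mul, h2]; nlinarith
    rw [e]
    refine le_trans (usub _ _) (max_le ?_ h2c)
    rw [h1]; nlinarith
  -- value of the b₁ quadratic at c is small
  have hval : ‖b₁ * (c - c₁) * (c - c₂)‖ < u / 8 := by
    have e : b₁ * (c - c₁) * (c - c₂) = (b₁ - β) * c ^ 2 := by
      rw [← hfac]; linear_combination hc
    rw [e, norm_mul, norm_pow, norm_sub_rev]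
    have hc2 : ‖c‖ ^ 2 ≤ 1 / 2 := by
      calc ‖c‖ ^ 2 ≤ u ^ 2 := pow_le_pow_left₀ (norm_nonneg c) hcnorm 2
        _ = 1 / 2 := hu2
    calc ‖β - b₁‖ * ‖c‖ ^ 2 ≤ ‖β - b₁‖ * (1 / 2) :=
          mul_le_mul_of_nonneg_left hc2 (norm_nonneg _)
      _ < (u / 4) * (1 / 2) := by
          exact mul_lt_mul_of_pos_right hβ (by norm_num)
      _ = u / 8 := by ring
  -- conclude by contradiction
  by_contra hcon
  push_neg at hcon
  have h12 : ‖c - c₁‖ ≤ max ‖c - c₂‖ ‖c₂ - c₁‖ := by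
    have e : c - c₁ = (c - c₂) + (c₂ - c₁) := by ring
    rw [e]
    exact IsUltrametricDist.norm_add_le_max _ _
  have hge : ‖c - c₁‖ ≤ ‖c - c₂‖ := by
    rcases le_max_iff.mp h12 with h | h
    · exact h
    · linarith
  rw [norm_mul, norm_mul, hb₁, one_mul] at hval
  have p1 : ‖c - c₁‖ * ‖c - c₁‖ ≤ ‖c - c₁‖ * ‖c - c₂‖ :=
    mul_le_mul_of_nonneg_left hge (norm_nonneg _)
  have p2 : (u / 2) * (u / 2) < ‖c - c₁‖ * ‖c - c₁‖ := by
    nlinarith [norm_nonneg (c - c₁)]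
  have p3 : (u / 2) * (u / 2) = 1 / 8 := by nlinarith
  nlinarith
end

section
/- For every β ∈ K with ‖β − b₁‖ < 1/(4√2), the third iterate of R_β maps the closed ball B_{1/(2√2)}(c₁) onto itself: R_β^{∘3}(B_{1/(2√2)}(c₁)) = B_{1/(2√2)}(c₁). -/
set_option linter.unusedSectionVars false
set_option linter.unusedVariables false

namespace Stmt10

variable {K : Type*} [NormedField K] [IsUltrametricDist K] [IsAlgClosed K]

lemma umax (x y : K) : ‖x + y‖ ≤ max ‖x‖ ‖y‖ :=
  IsUltrametricDist.norm_add_le_max x y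

lemma umax_sub (x y : K) : ‖x - y‖ ≤ max ‖x‖ ‖y‖ := by
  rw [sub_eq_add_neg]
  simpa using umax x (-y)

/-- if `‖y‖ < ‖x‖` then `‖x + y‖ = ‖x‖`. -/
lemma ueq {x y : K} (h : ‖y‖ < ‖x‖) : ‖x + y‖ = ‖x‖ := by
  have h1 : ‖x + y‖ ≤ ‖x‖ := (umax x y).trans_eq (max_eq_left h.le)
  have h2 : ‖x‖ ≤ max ‖x + y‖ ‖y‖ := by
    have := umax (x + y) (-y)
    simpa using this
  rcases max_cases ‖x + y‖ ‖y‖ with ⟨he, _⟩ | ⟨he, _⟩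
  · exact le_antisymm h1 (h2.trans_eq he)
  · exact absurd (h2.trans_eq he) (not_le.mpr h)

/-- if `‖y‖ < ‖x‖` then `‖x - y‖ = ‖x‖`. -/
lemma ueq_sub {x y : K} (h : ‖y‖ < ‖x‖) : ‖x - y‖ = ‖x‖ := by
  rw [sub_eq_add_neg]
  exact ueq (by simpa using h)

/-- if `‖x‖ < ‖y‖` then `‖x - y‖ = ‖y‖`. -/
lemma ueq_sub' {x y : K} (h : ‖x‖ < ‖y‖) : ‖x - y‖ = ‖y‖ := by
  rw [← norm_neg, neg_sub]
  exact ueq_sub h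

/-- if `‖x - c‖ < ‖c‖` then `‖x‖ = ‖c‖`. -/
lemma unorm_eq {x c : K} (h : ‖x - c‖ < ‖c‖) : ‖x‖ = ‖c‖ := by
  have : ‖c + (x - c)‖ = ‖c‖ := ueq h
  simpa using this

lemma pair_one {u v : K} {r : ℝ} (hp : ‖u * v‖ ≤ r ^ 2) (hs : ‖u + v‖ < r)
    (hu : r < ‖u‖) : False := by
  have hr : 0 < r := lt_of_le_of_lt (norm_nonneg _) hs
  have hu0 : 0 < ‖u‖ := hr.trans hu
  have hv : ‖v‖ < r := by
    rw [norm_mul] at hp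
    nlinarith [norm_nonneg v]
  have : ‖u + v‖ = ‖u‖ := ueq (hv.trans hu)
  linarith [this ▸ hs]

/-- both roots small -/
lemma pair_small {u v : K} {r : ℝ} (hp : ‖u * v‖ ≤ r ^ 2) (hs : ‖u + v‖ < r) :
    ‖u‖ ≤ r ∧ ‖v‖ ≤ r := by
  constructor
  · by_contra h
    exact pair_one hp hs (not_le.mp h)
  · by_contra h
    exact pair_one (by rwa [mul_comm]) (by rwa [add_comm]) (not_le.mp h)

/-- norms split -/
lemma pair_split {u v : K} {c : ℝ} (hM : ‖u + v‖ = 1) (hp : ‖u * v‖ ≤ c)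
    (hcM : c < 1) : ‖u‖ ≤ c ∨ ‖v‖ ≤ c := by
  by_contra h
  push_neg at h
  obtain ⟨h1, h2⟩ := h
  rw [norm_mul] at hp
  have hc0 : 0 ≤ c := le_trans (mul_nonneg (norm_nonneg u) (norm_nonneg v)) hp
  have hu1 : ‖u‖ < 1 := by nlinarith
  have hv1 : ‖v‖ < 1 := by nlinarith
  have : ‖u + v‖ < 1 := lt_of_le_of_lt (umax u v) (max_lt hu1 hv1)
  linarith [hM ▸ this]

/-- quadratic roots with given sum and product -/
lemma exists_sum_prod [IsAlgClosed K] (h2K : (2:K) ≠ 0) (S P : K) :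
    ∃ z w : K, z + w = S ∧ z * w = P := by
  obtain ⟨d, hd⟩ := IsAlgClosed.exists_pow_nat_eq (S ^ 2 - 4 * P) (n := 2) (by norm_num)
  refine ⟨(S + d) / 2, (S - d) / 2, by field_simp; ring, ?_⟩
  field_simp
  linear_combination -hd


/-- surjectivity step when both perturbed roots stay in the ball (critical ball case) -/
lemma sur1 (h2K : (2:K) ≠ 0) (β γ t ai : K) {ρ : ℝ}
    (hprod : ‖t * ai - γ * (1 + t * β) + γ ^ 2‖ ≤ ρ ^ 2)
    (hsum : ‖1 + t * β - 2 * γ‖ < ρ)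
    (hden : ∀ z : K, ‖z - γ‖ ≤ ρ → β * z - ai ≠ 0) :
    ∃ z : K, ‖z - γ‖ ≤ ρ ∧ (z ^ 2 - z) / (β * z - ai) = t := by
  obtain ⟨z, w, hzw, hprd⟩ := exists_sum_prod h2K (1 + t * β) (t * ai)
  have huv : (z - γ) * (w - γ) = t * ai - γ * (1 + t * β) + γ ^ 2 := by
    linear_combination hprd - γ * hzw
  have hsuv : (z - γ) + (w - γ) = 1 + t * β - 2 * γ := by linear_combination hzw
  have hball := pair_small (u := z - γ) (v := w - γ)
    (by rw [huv]; exact hprod) (by rw [hsuv]; exact hsum)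
  refine ⟨z, hball.1, ?_⟩
  rw [div_eq_iff (hden z hball.1)]
  linear_combination z * hzw - hprd

/-- surjectivity step when one perturbed root stays in the ball (norm-split case) -/
lemma sur2 (h2K : (2:K) ≠ 0) (β γ t ai : K) {ρ : ℝ}
    (hprod : ‖t * ai - γ * (1 + t * β) + γ ^ 2‖ ≤ ρ)
    (hsum : ‖1 + t * β - 2 * γ‖ = 1)
    (hρ1 : ρ < 1)
    (hden : ∀ z : K, ‖z - γ‖ ≤ ρ → β * z - ai ≠ 0) :
    ∃ z : K, ‖z - γ‖ ≤ ρ ∧ (z ^ 2 - z) / (β * z - ai) = t := by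
  obtain ⟨z, w, hzw, hprd⟩ := exists_sum_prod h2K (1 + t * β) (t * ai)
  have huv : (z - γ) * (w - γ) = t * ai - γ * (1 + t * β) + γ ^ 2 := by
    linear_combination hprd - γ * hzw
  have hsuv : (z - γ) + (w - γ) = 1 + t * β - 2 * γ := by linear_combination hzw
  have hsplit := pair_split (u := z - γ) (v := w - γ)
    (by rw [hsuv]; exact hsum) (by rw [huv]; exact hprod) hρ1
  rcases hsplit with h | h
  · refine ⟨z, h, ?_⟩
    rw [div_eq_iff (hden z h)]
    linear_combination z * hzw - hprd
  · refine ⟨w, h, ?_⟩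
    rw [div_eq_iff (hden w h)]
    linear_combination w * hzw - hprd

end Stmt10

set_option maxHeartbeats 1000000

/-- For every `β` with `‖β − b₁‖ < 1/(4√2)`, the third iterate of `R_β`
maps the closed ball `B_{1/(2√2)}(c₁)` onto itself. -/
theorem third_iterate_preserves_critical_ball
    {K : Type*} [NormedField K] [CompleteSpace K] [IsAlgClosed K] [IsUltrametricDist K]
    (h2 : ‖(2 : K)‖ = 1 / 2)
    (a b₁ c₁ : K) (ha : ‖a‖ = 2) (hb₁ : ‖b₁‖ = 1)
    (R : K → K → K) (hRdef : ∀ β z, R β z = (z ^ 2 - z) / (β * z - 1 / a))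
    (hc₁ : b₁ * c₁ ^ 2 - (2 / a) * c₁ + 1 / a = 0)
    (hper : (R b₁)^[3] '' Metric.closedBall c₁ (1 / (2 * Real.sqrt 2)) =
      Metric.closedBall c₁ (1 / (2 * Real.sqrt 2))) :
    ∀ β : K, ‖β - b₁‖ < 1 / (4 * Real.sqrt 2) →
      (R β)^[3] '' Metric.closedBall c₁ (1 / (2 * Real.sqrt 2)) =
        Metric.closedBall c₁ (1 / (2 * Real.sqrt 2)) := by
  intro β hβε
  -- real arithmetic facts
  set q : ℝ := Real.sqrt 2 with hqdef
  have hq2 : q ^ 2 = 2 := Real.sq_sqrt (by norm_num)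
  have hq0 : 0 < q := Real.sqrt_pos.mpr (by norm_num)
  have hq1 : 1 < q := by nlinarith [hq2, hq0]
  have hqlt : q < 3/2 := by nlinarith [hq2, hq0]
  set ρ₁ : ℝ := 1 / (2 * q) with hρ₁def
  set ρ₂ : ℝ := 1 / (4 * q) with hρ₂def
  have hρ₁0 : 0 < ρ₁ := by positivity
  have hρ₂0 : 0 < ρ₂ := by positivity
  have hρ₂₁ : ρ₂ < ρ₁ := by
    rw [hρ₁def, hρ₂def]
    have h4 : (0:ℝ) < 2 * q := by positivity
    apply one_div_lt_one_div_of_lt h4; linarith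
  have h1q0 : (0:ℝ) < 1/q := by positivity
  have h1q1 : 1/q < 1 := by rw [div_lt_one hq0]; exact hq1
  have hc2q : (1:ℝ)/2 < 1/q := by
    rw [div_lt_div_iff₀ (by norm_num) hq0]; linarith
  have hρ₁lt : ρ₁ < 1/q := by
    rw [hρ₁def, div_lt_div_iff₀ (by positivity) hq0]; linarith
  have hρ₁half : ρ₁ < 1/2 := by
    rw [hρ₁def, div_lt_div_iff₀ (by positivity) (by norm_num)]; linarith
  have hρ₁1 : ρ₁ < 1 := hρ₁half.trans (by norm_num)
  have hρ₂1 : ρ₂ < 1 := hρ₂₁.trans hρ₁1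
  have hq3 : q^3 = 2*q := by linear_combination q*hq2
  have h8 : (2*q)^2 = 8 := by linear_combination 4*hq2
  have hρ₁sq : ρ₁^2 = 1/8 := by rw [hρ₁def, div_pow, one_pow, h8]
  have hq_eq1 : (1/q) * ρ₂ = ρ₁^2 := by
    rw [hρ₁sq, hρ₂def, div_mul_div_comm, one_mul,
      div_eq_div_iff (by positivity) (by norm_num)]
    linear_combination (-4)*hq2
  have hcube : (1/q)^3 = ρ₁ := by rw [hρ₁def, div_pow, one_pow, hq3]
  -- basic K facts
  have hne0 : ∀ (x : K) (r : ℝ), ‖x‖ = r → 0 < r → x ≠ 0 := by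
    intro x r h hr h0; rw [h0, norm_zero] at h; linarith
  have ha0 : a ≠ 0 := hne0 a 2 ha (by norm_num)
  have hai : ‖1/a‖ = 1/2 := by rw [norm_div, norm_one, ha]
  have h2K : (2:K) ≠ 0 := hne0 _ _ h2 (by norm_num)
  have hzm1 : ∀ z : K, ‖z‖ < 1 → ‖z - 1‖ = 1 := by
    intro z hz
    rw [← norm_neg, neg_sub]
    have := Stmt10.ueq_sub (x := (1:K)) (y := z) (by rwa [norm_one])
    rwa [norm_one] at this
  -- ‖c₁‖ = 1/√2
  have hcn : ‖c₁‖ = 1/q := by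
    have e1 : b₁ * c₁^2 = (2/a)*c₁ - 1/a := by linear_combination hc₁
    have e2 : (1:K)/a = (2/a)*c₁ - b₁*c₁^2 := by linear_combination hc₁
    have h2a : ‖(2:K)/a‖ = 1/4 := by rw [norm_div, h2, ha]; norm_num
    have n1 : ‖c₁‖^2 ≤ max (1/4 * ‖c₁‖) (1/2) := by
      calc ‖c₁‖^2 = ‖b₁ * c₁^2‖ := by rw [norm_mul, hb₁, norm_pow, one_mul]
      _ = ‖(2/a)*c₁ - 1/a‖ := by rw [e1]
      _ ≤ max ‖(2/a)*c₁‖ ‖1/a‖ := Stmt10.umax_sub _ _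
      _ = max (1/4 * ‖c₁‖) (1/2) := by rw [norm_mul, h2a, hai]
    have n2 : 1/2 ≤ max (1/4 * ‖c₁‖) (‖c₁‖^2) := by
      calc (1:ℝ)/2 = ‖(1:K)/a‖ := hai.symm
      _ = ‖(2/a)*c₁ - b₁*c₁^2‖ := by rw [← e2]
      _ ≤ max ‖(2/a)*c₁‖ ‖b₁*c₁^2‖ := Stmt10.umax_sub _ _
      _ = max (1/4 * ‖c₁‖) (‖c₁‖^2) := by
          rw [norm_mul, h2a, norm_mul, hb₁, norm_pow, one_mul]
    have hx0 : 0 ≤ ‖c₁‖ := norm_nonneg _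
    have hsq : ‖c₁‖^2 = 1/2 := by
      rcases le_max_iff.mp n1 with h1 | h1 <;> rcases le_max_iff.mp n2 with hh | hh
      · exfalso; nlinarith
      · exfalso; nlinarith
      · exfalso; nlinarith
      · linarith
    have h3 : (q * ‖c₁‖)^2 = 1 := by rw [mul_pow, hq2, hsq]; norm_num
    have h4 : (q*‖c₁‖ - 1)*(q*‖c₁‖ + 1) = 0 := by linear_combination h3
    rcases mul_eq_zero.mp h4 with h5 | h5
    · have : q * ‖c₁‖ = 1 := by linarith
      field_simp
      linarith [this]
    · exfalso; nlinarith
  have hβn : ‖β‖ = 1 := by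
    rw [Stmt10.unorm_eq (c := b₁) (by rw [hb₁]; exact hβε.trans hρ₂1), hb₁]
  have hc0 : c₁ ≠ 0 := hne0 c₁ _ hcn h1q0
  -- centers
  set γ₁ : K := (c₁^2 - c₁)/(b₁*c₁ - 1/a) with hγ₁def
  set γ₂ : K := (γ₁^2 - γ₁)/(b₁*γ₁ - 1/a) with hγ₂def
  have hDnc : ‖b₁*c₁ - 1/a‖ = 1/q := by
    rw [Stmt10.ueq_sub (by rw [hai, norm_mul, hb₁, one_mul, hcn]; exact hc2q),
      norm_mul, hb₁, one_mul, hcn]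
  have hDnc0 : b₁*c₁ - 1/a ≠ 0 := hne0 _ _ hDnc h1q0
  have hcm1 : ‖c₁ - 1‖ = 1 := hzm1 c₁ (by rw [hcn]; exact h1q1)
  have hγ₁n : ‖γ₁‖ = 1 := by
    rw [hγ₁def, norm_div, hDnc, show c₁^2 - c₁ = c₁*(c₁-1) by ring, norm_mul, hcn, hcm1,
      mul_one, div_self (ne_of_gt h1q0)]
  have hγ₁0 : γ₁ ≠ 0 := hne0 _ _ hγ₁n one_pos
  have hDγ₁ : ‖b₁*γ₁ - 1/a‖ = 1 := by
    rw [Stmt10.ueq_sub (by rw [hai, norm_mul, hb₁, one_mul, hγ₁n]; norm_num),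
      norm_mul, hb₁, one_mul, hγ₁n]
  have hDγ₁0 : b₁*γ₁ - 1/a ≠ 0 := hne0 _ _ hDγ₁ one_pos
  have hγ₂le1 : ‖γ₂‖ ≤ 1 := by
    rw [hγ₂def, norm_div, hDγ₁, div_one, show γ₁^2 - γ₁ = γ₁*(γ₁-1) by ring, norm_mul, hγ₁n,
      one_mul]
    exact (Stmt10.umax_sub γ₁ 1).trans (by rw [hγ₁n, norm_one]; norm_num)
  -- algebraic identities
  have hA1 : γ₁ * (b₁*c₁ - 1/a) = c₁^2 - c₁ := by
    rw [hγ₁def]; exact div_mul_cancel₀ _ hDnc0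
  have hA2 : γ₂ * (b₁*γ₁ - 1/a) = γ₁^2 - γ₁ := by
    rw [hγ₂def]; exact div_mul_cancel₀ _ hDγ₁0
  have hkey : 1 - 2*c₁ + γ₁*b₁ = 0 := by
    have hz : (1 - 2*c₁ + γ₁*b₁) * (b₁*c₁ - 1/a) = 0 := by
      linear_combination b₁*hA1 - hc₁
    rcases mul_eq_zero.mp hz with h' | h'
    · exact h'
    · exact absurd h' hDnc0
  -- difference formulas
  have hdiffV : ∀ (z w : K), b₁*z - 1/a ≠ 0 → b₁*w - 1/a ≠ 0 →
      (z^2 - z)/(b₁*z - 1/a) - (w^2 - w)/(b₁*w - 1/a) =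
        ((z - w) * (b₁*z*w - (z+w)/a + 1/a)) / ((b₁*z - 1/a)*(b₁*w - 1/a)) := by
    intro z w hz hw
    rw [div_sub_div _ _ hz hw, div_eq_div_iff (mul_ne_zero hz hw) (mul_ne_zero hz hw)]
    ring
  have hdiffP : ∀ (β' z : K), β'*z - 1/a ≠ 0 → b₁*z - 1/a ≠ 0 →
      (z^2 - z)/(β'*z - 1/a) - (z^2 - z)/(b₁*z - 1/a) =
        ((b₁ - β') * (z * (z^2 - z))) / ((β'*z - 1/a)*(b₁*z - 1/a)) := by
    intro β' z h1 h2
    rw [div_sub_div _ _ h1 h2, div_eq_div_iff (mul_ne_zero h1 h2) (mul_ne_zero h1 h2)]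
    ring
  have hEbound : ∀ z w : K, ‖z‖ ≤ 1 → ‖w‖ ≤ 1 → ‖b₁*z*w - (z+w)/a + 1/a‖ ≤ 1 := by
    intro z w hz hw
    refine (Stmt10.umax _ _).trans (max_le (le_trans (Stmt10.umax_sub _ _) (max_le ?_ ?_)) ?_)
    · rw [norm_mul, norm_mul, hb₁, one_mul]
      exact mul_le_one₀ hz (norm_nonneg _) hw
    · rw [norm_div, ha]
      have := (Stmt10.umax z w).trans (max_le hz hw)
      linarith
    · rw [hai]; norm_num
  have hiter : ∀ (g : K → K) (s : Set K), g^[3] '' s = g '' (g '' (g '' s)) := by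
    intro g s
    rw [show g^[3] = g ∘ g ∘ g from funext fun x => rfl, Set.image_comp, Set.image_comp]
  -- step 1 : the critical ball maps onto B(γ₁, ρ₂)
  have step1 : ∀ β' : K, ‖β' - b₁‖ < ρ₂ →
      R β' '' Metric.closedBall c₁ ρ₁ = Metric.closedBall γ₁ ρ₂ := by
    intro β' hb'
    have hβ'n : ‖β'‖ = 1 := by
      rw [Stmt10.unorm_eq (c := b₁) (by rw [hb₁]; exact hb'.trans hρ₂1), hb₁]
    apply Set.Subset.antisymm
    · rintro _ ⟨z, hz, rfl⟩
      rw [Metric.mem_closedBall, dist_eq_norm] at hz ⊢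
      rw [hRdef]
      have hzn : ‖z‖ = 1/q := by
        rw [Stmt10.unorm_eq (c := c₁) (by rw [hcn]; exact lt_of_le_of_lt hz hρ₁lt), hcn]
      have hz1 : ‖z - 1‖ = 1 := hzm1 z (by rw [hzn]; exact h1q1)
      have hNz : ‖z^2 - z‖ = 1/q := by
        rw [show z^2 - z = z*(z-1) by ring, norm_mul, hzn, hz1, mul_one]
      have hDz : ‖b₁*z - 1/a‖ = 1/q := by
        rw [Stmt10.ueq_sub (by rw [hai, norm_mul, hb₁, one_mul, hzn]; exact hc2q),
          norm_mul, hb₁, one_mul, hzn]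
      have hDz' : ‖β'*z - 1/a‖ = 1/q := by
        rw [Stmt10.ueq_sub (by rw [hai, norm_mul, hβ'n, one_mul, hzn]; exact hc2q),
          norm_mul, hβ'n, one_mul, hzn]
      have hDz0 : b₁*z - 1/a ≠ 0 := hne0 _ _ hDz h1q0
      have hDz0' : β'*z - 1/a ≠ 0 := hne0 _ _ hDz' h1q0
      have hfz : (z^2 - z)/(b₁*z - 1/a) - γ₁ = (z - c₁)^2 / (b₁*z - 1/a) := by
        rw [hγ₁def, div_sub_div _ _ hDz0 hDnc0, div_eq_div_iff (mul_ne_zero hDz0 hDnc0) hDz0]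
        ring_nf
        linear_combination ((b₁*z - 1/a) * (z - c₁)) * hc₁
      have n1 : ‖(z^2 - z)/(b₁*z - 1/a) - γ₁‖ ≤ ρ₂ := by
        rw [hfz, norm_div, norm_pow, hDz, div_le_iff₀ h1q0]
        have h1 : ‖z - c₁‖^2 ≤ ρ₁^2 := pow_le_pow_left₀ (norm_nonneg _) hz 2
        exact h1.trans_eq (by rw [← hq_eq1]; ring)
      have n2 : ‖(z^2 - z)/(β'*z - 1/a) - (z^2 - z)/(b₁*z - 1/a)‖ < ρ₂ := by
        have e : ‖(b₁ - β') * (z * (z^2 - z)) / ((β'*z - 1/a)*(b₁*z - 1/a))‖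
            = ‖b₁ - β'‖ * (‖z‖ * ‖z^2 - z‖) / (‖β'*z - 1/a‖ * ‖b₁*z - 1/a‖) := by
          rw [norm_div, norm_mul, norm_mul, norm_mul]
        rw [hdiffP β' z hDz0' hDz0, e, hzn, hNz, hDz, hDz', norm_sub_rev]
        have e2 : ‖β' - b₁‖ * (1/q * (1/q)) / (1/q * (1/q)) = ‖β' - b₁‖ := by
          field_simp
        rw [e2]; exact hb'
      have comb : (z^2 - z)/(β'*z - 1/a) - γ₁ =
          ((z^2 - z)/(β'*z - 1/a) - (z^2 - z)/(b₁*z - 1/a)) +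
            ((z^2 - z)/(b₁*z - 1/a) - γ₁) := by ring
      rw [comb]
      exact (Stmt10.umax _ _).trans (max_le n2.le n1)
    · intro t ht
      rw [Metric.mem_closedBall, dist_eq_norm] at ht
      have htn : ‖t‖ = 1 := by
        rw [Stmt10.unorm_eq (c := γ₁) (by rw [hγ₁n]; exact lt_of_le_of_lt ht hρ₂1), hγ₁n]
      have hprod : ‖t * (1/a) - c₁*(1 + t*β') + c₁^2‖ ≤ ρ₁^2 := by
        have hid : t * (1/a) - c₁*(1 + t*β') + c₁^2
            = (b₁*c₁ - 1/a)*(γ₁ - t) + t*(b₁ - β')*c₁ := by linear_combination -hA1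
        rw [hid]
        refine (Stmt10.umax _ _).trans (max_le ?_ ?_)
        · rw [norm_mul, hDnc, ← hq_eq1]
          have h' : ‖γ₁ - t‖ ≤ ρ₂ := (norm_sub_rev t γ₁) ▸ ht
          exact mul_le_mul_of_nonneg_left h' h1q0.le
        · rw [norm_mul, norm_mul, htn, one_mul, norm_sub_rev, hcn, ← hq_eq1]
          calc ‖β' - b₁‖ * (1/q) ≤ ρ₂ * (1/q) :=
                mul_le_mul_of_nonneg_right hb'.le h1q0.le
          _ = 1/q * ρ₂ := mul_comm _ _
      have hsum : ‖1 + t*β' - 2*c₁‖ < ρ₁ := by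
        have hid : 1 + t*β' - 2*c₁ = (t - γ₁)*b₁ + t*(β' - b₁) := by linear_combination hkey
        rw [hid]
        refine lt_of_le_of_lt ((Stmt10.umax _ _).trans (max_le ?_ ?_)) hρ₂₁
        · rw [norm_mul, hb₁, mul_one]; exact ht
        · rw [norm_mul, htn, one_mul]; exact hb'.le
      have hden : ∀ z : K, ‖z - c₁‖ ≤ ρ₁ → β'*z - 1/a ≠ 0 := by
        intro z hzc
        have hzn : ‖z‖ = 1/q := by
          rw [Stmt10.unorm_eq (c := c₁) (by rw [hcn]; exact lt_of_le_of_lt hzc hρ₁lt), hcn]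
        refine hne0 _ (1/q) ?_ h1q0
        rw [Stmt10.ueq_sub (by rw [hai, norm_mul, hβ'n, one_mul, hzn]; exact hc2q),
          norm_mul, hβ'n, one_mul, hzn]
      obtain ⟨z, hzb, hgz⟩ := Stmt10.sur1 h2K β' c₁ t (1/a) hprod hsum hden
      exact ⟨z, by rw [Metric.mem_closedBall, dist_eq_norm]; exact hzb,
        by rw [hRdef]; exact hgz⟩
  -- step 2 : B(γ₁,ρ₂) maps onto B(γ₂,ρ₂)
  have haa : a * (1/a) = 1 := by field_simp
  have hA2' : γ₂ * (a*b₁*γ₁ - 1) = a*(γ₁^2 - γ₁) := by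
    linear_combination a*hA2 + γ₂*haa
  have hval : γ₂/(a*γ₁) = 1 + γ₂*b₁ - γ₁ := by
    rw [div_eq_iff (mul_ne_zero ha0 hγ₁0)]
    linear_combination -hA2'
  have step2 : ∀ β' : K, ‖β' - b₁‖ < ρ₂ →
      R β' '' Metric.closedBall γ₁ ρ₂ = Metric.closedBall γ₂ ρ₂ := by
    intro β' hb'
    have hβ'n : ‖β'‖ = 1 := by
      rw [Stmt10.unorm_eq (c := b₁) (by rw [hb₁]; exact hb'.trans hρ₂1), hb₁]
    apply Set.Subset.antisymm
    · rintro _ ⟨z, hz, rfl⟩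
      rw [Metric.mem_closedBall, dist_eq_norm] at hz ⊢
      rw [hRdef]
      have hzn : ‖z‖ = 1 := by
        rw [Stmt10.unorm_eq (c := γ₁) (by rw [hγ₁n]; exact lt_of_le_of_lt hz hρ₂1), hγ₁n]
      have hz1 : ‖z - 1‖ ≤ 1 := (Stmt10.umax_sub z 1).trans
        (by rw [hzn, norm_one]; norm_num)
      have hDz : ‖b₁*z - 1/a‖ = 1 := by
        rw [Stmt10.ueq_sub (by rw [hai, norm_mul, hb₁, one_mul, hzn]; norm_num),
          norm_mul, hb₁, one_mul, hzn]
      have hDz' : ‖β'*z - 1/a‖ = 1 := by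
        rw [Stmt10.ueq_sub (by rw [hai, norm_mul, hβ'n, one_mul, hzn]; norm_num),
          norm_mul, hβ'n, one_mul, hzn]
      have hDz0 := hne0 _ _ hDz one_pos
      have hDz0' := hne0 _ _ hDz' one_pos
      have hiso : (z^2 - z)/(b₁*z - 1/a) - γ₂ =
          (z - γ₁) * (b₁*z*γ₁ - (z+γ₁)/a + 1/a) / ((b₁*z - 1/a)*(b₁*γ₁ - 1/a)) := by
        rw [hγ₂def]; exact hdiffV z γ₁ hDz0 hDγ₁0
      have hE : ‖b₁*z*γ₁ - (z+γ₁)/a + 1/a‖ ≤ 1 := hEbound z γ₁ (le_of_eq hzn) (le_of_eq hγ₁n)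
      have n1 : ‖(z^2 - z)/(b₁*z - 1/a) - γ₂‖ ≤ ρ₂ := by
        rw [hiso, norm_div, norm_mul, norm_mul, hDz, hDγ₁]
        have e : ‖z - γ₁‖ * ‖b₁*z*γ₁ - (z+γ₁)/a + 1/a‖ / (1*1)
            = ‖z - γ₁‖ * ‖b₁*z*γ₁ - (z+γ₁)/a + 1/a‖ := by norm_num
        rw [e]
        exact (mul_le_mul hz hE (norm_nonneg _) hρ₂0.le).trans_eq (mul_one _)
      have hNz : ‖z^2 - z‖ ≤ 1 := by
        rw [show z^2 - z = z*(z-1) by ring, norm_mul, hzn, one_mul]; exact hz1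
      have n2 : ‖(z^2 - z)/(β'*z - 1/a) - (z^2 - z)/(b₁*z - 1/a)‖ < ρ₂ := by
        have e : ‖(b₁ - β') * (z * (z^2 - z)) / ((β'*z - 1/a)*(b₁*z - 1/a))‖
            = ‖b₁ - β'‖ * (‖z‖ * ‖z^2 - z‖) / (‖β'*z - 1/a‖ * ‖b₁*z - 1/a‖) := by
          rw [norm_div, norm_mul, norm_mul, norm_mul]
        rw [hdiffP β' z hDz0' hDz0, e, hzn, hDz, hDz', norm_sub_rev]
        have e2 : ‖β' - b₁‖ * (1 * ‖z^2 - z‖) / (1*1) = ‖β' - b₁‖ * ‖z^2 - z‖ := by ring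
        rw [e2]
        calc ‖β' - b₁‖ * ‖z^2 - z‖ ≤ ‖β' - b₁‖ * 1 :=
              mul_le_mul_of_nonneg_left hNz (norm_nonneg _)
        _ = ‖β' - b₁‖ := mul_one _
        _ < ρ₂ := hb'
      have comb : (z^2 - z)/(β'*z - 1/a) - γ₂ =
          ((z^2 - z)/(β'*z - 1/a) - (z^2 - z)/(b₁*z - 1/a)) +
            ((z^2 - z)/(b₁*z - 1/a) - γ₂) := by ring
      rw [comb]
      exact (Stmt10.umax _ _).trans (max_le n2.le n1)
    · intro t ht
      rw [Metric.mem_closedBall, dist_eq_norm] at ht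
      have htle : ‖t‖ ≤ 1 := by
        have e : t = (t - γ₂) + γ₂ := by ring
        rw [e]
        exact (Stmt10.umax _ _).trans (max_le (ht.trans hρ₂1.le) hγ₂le1)
      have hprod : ‖t * (1/a) - γ₁*(1 + t*β') + γ₁^2‖ ≤ ρ₂ := by
        have hid : t * (1/a) - γ₁*(1 + t*β') + γ₁^2
            = (b₁*γ₁ - 1/a)*(γ₂ - t) + t*(b₁ - β')*γ₁ := by linear_combination -hA2
        rw [hid]
        refine (Stmt10.umax _ _).trans (max_le ?_ ?_)
        · rw [norm_mul, hDγ₁, one_mul]; exact (norm_sub_rev t γ₂) ▸ ht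
        · rw [norm_mul, norm_mul, hγ₁n, mul_one, norm_sub_rev]
          calc ‖t‖ * ‖β' - b₁‖ ≤ 1 * ‖β' - b₁‖ :=
                mul_le_mul_of_nonneg_right htle (norm_nonneg _)
          _ = ‖β' - b₁‖ := one_mul _
          _ ≤ ρ₂ := hb'.le
      have hsum : ‖1 + t*β' - 2*γ₁‖ = 1 := by
        have hid : 1 + t*β' - 2*γ₁ = (γ₂/(a*γ₁) - γ₁) + ((t - γ₂)*b₁ + t*(β' - b₁)) := by
          rw [hval]; ring
        have hx : ‖γ₂/(a*γ₁) - γ₁‖ = 1 := by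
          have hlt : ‖γ₂/(a*γ₁)‖ < ‖γ₁‖ := by
            rw [norm_div, norm_mul, ha, hγ₁n, mul_one]
            linarith [hγ₂le1]
          rw [Stmt10.ueq_sub' hlt, hγ₁n]
        have hy : ‖(t - γ₂)*b₁ + t*(β' - b₁)‖ < 1 := by
          refine lt_of_le_of_lt ((Stmt10.umax _ _).trans (max_le ?_ ?_)) hρ₂1
          · rw [norm_mul, hb₁, mul_one]; exact ht
          · rw [norm_mul]
            calc ‖t‖ * ‖β' - b₁‖ ≤ 1 * ‖β' - b₁‖ :=
                  mul_le_mul_of_nonneg_right htle (norm_nonneg _)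
            _ = ‖β' - b₁‖ := one_mul _
            _ ≤ ρ₂ := hb'.le
        rw [hid, Stmt10.ueq (by rw [hx]; exact hy), hx]
      have hden : ∀ z : K, ‖z - γ₁‖ ≤ ρ₂ → β'*z - 1/a ≠ 0 := by
        intro z hzc
        have hzn : ‖z‖ = 1 := by
          rw [Stmt10.unorm_eq (c := γ₁) (by rw [hγ₁n]; exact lt_of_le_of_lt hzc hρ₂1), hγ₁n]
        refine hne0 _ 1 ?_ one_pos
        rw [Stmt10.ueq_sub (by rw [hai, norm_mul, hβ'n, one_mul, hzn]; norm_num),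
          norm_mul, hβ'n, one_mul, hzn]
      obtain ⟨z, hzb, hgz⟩ := Stmt10.sur2 h2K β' γ₁ t (1/a) hprod hsum hρ₂1 hden
      exact ⟨z, by rw [Metric.mem_closedBall, dist_eq_norm]; exact hzb,
        by rw [hRdef]; exact hgz⟩
  -- instantiate at b₁ and use the periodicity hypothesis
  have hb₁self : ‖b₁ - b₁‖ < ρ₂ := by rw [sub_self, norm_zero]; exact hρ₂0
  have hB12 := step1 b₁ hb₁self
  have hB23 := step2 b₁ hb₁self
  have hfB₃ : R b₁ '' Metric.closedBall γ₂ ρ₂ = Metric.closedBall c₁ ρ₁ := by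
    have h := hper
    rw [hiter (R b₁), hB12, hB23] at h
    exact h
  set γ₃ : K := (γ₂^2 - γ₂)/(b₁*γ₂ - 1/a) with hγ₃def
  have hγ₃B₁ : ‖γ₃ - c₁‖ ≤ ρ₁ := by
    have hmem : γ₃ ∈ Metric.closedBall c₁ ρ₁ := by
      rw [← hfB₃]
      exact ⟨γ₂, Metric.mem_closedBall_self hρ₂0.le, by rw [hRdef]⟩
    rwa [Metric.mem_closedBall, dist_eq_norm] at hmem
  have hγ₃n : ‖γ₃‖ = 1/q := by
    rw [Stmt10.unorm_eq (c := c₁) (by rw [hcn]; exact lt_of_le_of_lt hγ₃B₁ hρ₁lt), hcn]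
  -- the center γ₂ has norm ρ₁ (case analysis)
  have hkey₂ : ‖γ₂‖ = ρ₁ ∧ ‖b₁*γ₂ - 1/a‖ = 1/2 := by
    by_cases hcase : ‖γ₂‖ = 1
    · exfalso
      have hc₁3 : ‖c₁^3‖ = ρ₁ := by rw [norm_pow, hcn, hcube]
      have hxB : γ₃ + c₁^3 ∈ Metric.closedBall c₁ ρ₁ := by
        rw [Metric.mem_closedBall, dist_eq_norm,
          show γ₃ + c₁^3 - c₁ = (γ₃ - c₁) + c₁^3 by ring]
        exact (Stmt10.umax _ _).trans (max_le hγ₃B₁ hc₁3.le)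
      rw [← hfB₃] at hxB
      obtain ⟨u, hu, hfu⟩ := hxB
      rw [Metric.mem_closedBall, dist_eq_norm] at hu
      rw [hRdef] at hfu
      have hun : ‖u‖ = 1 := by
        rw [Stmt10.unorm_eq (c := γ₂) (by rw [hcase]; exact lt_of_le_of_lt hu hρ₂1)]
        exact hcase
      have hDu : ‖b₁*u - 1/a‖ = 1 := by
        rw [Stmt10.ueq_sub (by rw [hai, norm_mul, hb₁, one_mul, hun]; norm_num),
          norm_mul, hb₁, one_mul, hun]
      have hDγ₂ : ‖b₁*γ₂ - 1/a‖ = 1 := by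
        rw [Stmt10.ueq_sub (by rw [hai, norm_mul, hb₁, one_mul, hcase]; norm_num),
          norm_mul, hb₁, one_mul, hcase]
      have hDu0 := hne0 _ _ hDu one_pos
      have hDγ₂0 := hne0 _ _ hDγ₂ one_pos
      have hiso : (u^2 - u)/(b₁*u - 1/a) - γ₃ =
          (u - γ₂) * (b₁*u*γ₂ - (u+γ₂)/a + 1/a) / ((b₁*u - 1/a)*(b₁*γ₂ - 1/a)) := by
        rw [hγ₃def]; exact hdiffV u γ₂ hDu0 hDγ₂0
      have hEu : ‖b₁*u*γ₂ - (u+γ₂)/a + 1/a‖ ≤ 1 := hEbound u γ₂ hun.le hγ₂le1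
      have hsmall : ‖(u^2 - u)/(b₁*u - 1/a) - γ₃‖ ≤ ρ₂ := by
        rw [hiso, norm_div, norm_mul, norm_mul, hDu, hDγ₂]
        have e : ‖u - γ₂‖ * ‖b₁*u*γ₂ - (u+γ₂)/a + 1/a‖ / (1*1)
            = ‖u - γ₂‖ * ‖b₁*u*γ₂ - (u+γ₂)/a + 1/a‖ := by norm_num
        rw [e]
        exact (mul_le_mul hu hEu (norm_nonneg _) hρ₂0.le).trans_eq (mul_one _)
      rw [hfu, show γ₃ + c₁^3 - γ₃ = c₁^3 by ring, hc₁3] at hsmall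
      linarith
    · have hlt1 : ‖γ₂‖ < 1 := lt_of_le_of_ne hγ₂le1 hcase
      have hγ₂1 : ‖γ₂ - 1‖ = 1 := hzm1 γ₂ hlt1
      have hD0 : b₁*γ₂ - 1/a ≠ 0 := by
        intro h0
        have h1 := hγ₃n
        rw [hγ₃def, h0, div_zero, norm_zero] at h1
        linarith
      have hstar : ‖γ₂‖ = (1/q) * ‖b₁*γ₂ - 1/a‖ := by
        have h2 : ‖γ₃‖ * ‖b₁*γ₂ - 1/a‖ = ‖γ₂‖ * ‖γ₂ - 1‖ := by
          rw [← norm_mul, ← norm_mul, hγ₃def, div_mul_cancel₀ _ hD0,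
            show γ₂^2 - γ₂ = γ₂*(γ₂-1) by ring]
        rw [hγ₃n, hγ₂1, mul_one] at h2
        exact h2.symm
      rcases lt_trichotomy ‖γ₂‖ (1/2) with hgl | hgl | hgl
      · have hD : ‖b₁*γ₂ - 1/a‖ = 1/2 := by
          rw [Stmt10.ueq_sub' (by rw [norm_mul, hb₁, one_mul, hai]; exact hgl)]
          exact hai
        refine ⟨?_, hD⟩
        rw [hstar, hD, hρ₁def]
        ring
      · exfalso
        have hD : ‖b₁*γ₂ - 1/a‖ ≤ 1/2 := by
          refine (Stmt10.umax_sub _ _).trans (max_le ?_ ?_)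
          · rw [norm_mul, hb₁, one_mul]; exact le_of_eq hgl
          · rw [hai]
        have h5 : (1/q) * ‖b₁*γ₂ - 1/a‖ ≤ (1/q) * (1/2) :=
          mul_le_mul_of_nonneg_left hD h1q0.le
        have h6 : (1/q) * (1/2) < 1 * (1/2) :=
          mul_lt_mul_of_pos_right h1q1 (by norm_num)
        linarith [hstar]
      · exfalso
        have hD : ‖b₁*γ₂ - 1/a‖ = ‖γ₂‖ := by
          rw [Stmt10.ueq_sub (by rw [hai, norm_mul, hb₁, one_mul]; exact hgl),
            norm_mul, hb₁, one_mul]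
        rw [hD] at hstar
        have h5 : (1/q) * ‖γ₂‖ < 1 * ‖γ₂‖ :=
          mul_lt_mul_of_pos_right h1q1 (by linarith)
        linarith
  obtain ⟨hγ₂ρ, hDγ₂n⟩ := hkey₂
  have hDγ₂0 : b₁*γ₂ - 1/a ≠ 0 := hne0 _ _ hDγ₂n (by norm_num)
  have hA3 : γ₃ * (b₁*γ₂ - 1/a) = γ₂^2 - γ₂ := by
    rw [hγ₃def]; exact div_mul_cancel₀ _ hDγ₂0
  -- step 3 : B(γ₂,ρ₂) maps onto the critical ball
  have step3 : ∀ β' : K, ‖β' - b₁‖ < ρ₂ →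
      R β' '' Metric.closedBall γ₂ ρ₂ = Metric.closedBall c₁ ρ₁ := by
    intro β' hb'
    have hβ'n : ‖β'‖ = 1 := by
      rw [Stmt10.unorm_eq (c := b₁) (by rw [hb₁]; exact hb'.trans hρ₂1), hb₁]
    apply Set.Subset.antisymm
    · rintro _ ⟨u, hu, rfl⟩
      rw [Metric.mem_closedBall, dist_eq_norm] at hu ⊢
      have hun : ‖u‖ = ρ₁ := by
        rw [Stmt10.unorm_eq (c := γ₂) (by rw [hγ₂ρ]; exact lt_of_le_of_lt hu hρ₂₁), hγ₂ρ]
      have hu1 : ‖u - 1‖ = 1 := hzm1 u (by rw [hun]; exact hρ₁1)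
      have hNu : ‖u^2 - u‖ = ρ₁ := by
        rw [show u^2 - u = u*(u-1) by ring, norm_mul, hun, hu1, mul_one]
      have hDu : ‖b₁*u - 1/a‖ = 1/2 := by
        rw [Stmt10.ueq_sub' (by rw [norm_mul, hb₁, one_mul, hun, hai]; exact hρ₁half)]
        exact hai
      have hDu' : ‖β'*u - 1/a‖ = 1/2 := by
        rw [Stmt10.ueq_sub' (by rw [norm_mul, hβ'n, one_mul, hun, hai]; exact hρ₁half)]
        exact hai
      have hDu0 := hne0 _ _ hDu (by norm_num)
      have hDu0' := hne0 _ _ hDu' (by norm_num)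
      have hfmem : ‖(u^2 - u)/(b₁*u - 1/a) - c₁‖ ≤ ρ₁ := by
        have hmem : (u^2 - u)/(b₁*u - 1/a) ∈ Metric.closedBall c₁ ρ₁ := by
          rw [← hfB₃]
          exact ⟨u, by rw [Metric.mem_closedBall, dist_eq_norm]; exact hu, by rw [hRdef]⟩
        rwa [Metric.mem_closedBall, dist_eq_norm] at hmem
      have n2 : ‖(u^2 - u)/(β'*u - 1/a) - (u^2 - u)/(b₁*u - 1/a)‖ ≤ ρ₁ := by
        have e : ‖(b₁ - β') * (u * (u^2 - u)) / ((β'*u - 1/a)*(b₁*u - 1/a))‖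
            = ‖b₁ - β'‖ * (‖u‖ * ‖u^2 - u‖) / (‖β'*u - 1/a‖ * ‖b₁*u - 1/a‖) := by
          rw [norm_div, norm_mul, norm_mul, norm_mul]
        rw [hdiffP β' u hDu0' hDu0, e, hun, hNu, hDu, hDu', norm_sub_rev]
        have e2 : ‖β' - b₁‖ * (ρ₁ * ρ₁) / (1/2 * (1/2)) = ‖β' - b₁‖ / 2 := by
          rw [show ρ₁ * ρ₁ = 1/8 from by rw [← sq]; exact hρ₁sq]
          ring
        rw [e2]
        linarith [hb', hρ₂₁, hρ₂0]
      rw [hRdef,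
        show (u^2 - u)/(β'*u - 1/a) - c₁ =
          ((u^2 - u)/(β'*u - 1/a) - (u^2 - u)/(b₁*u - 1/a)) +
            ((u^2 - u)/(b₁*u - 1/a) - c₁) by ring]
      exact (Stmt10.umax _ _).trans (max_le n2 hfmem)
    · intro t ht
      rw [Metric.mem_closedBall, dist_eq_norm] at ht
      have htn : ‖t‖ = 1/q := by
        rw [Stmt10.unorm_eq (c := c₁) (by rw [hcn]; exact lt_of_le_of_lt ht hρ₁lt), hcn]
      have hprod : ‖t * (1/a) - γ₂*(1 + t*β') + γ₂^2‖ ≤ ρ₂ := by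
        have hid : t * (1/a) - γ₂*(1 + t*β') + γ₂^2
            = (b₁*γ₂ - 1/a)*(γ₃ - t) + t*(b₁ - β')*γ₂ := by linear_combination -hA3
        rw [hid]
        refine (Stmt10.umax _ _).trans (max_le ?_ ?_)
        · rw [norm_mul, hDγ₂n]
          have h5 : ‖γ₃ - t‖ ≤ ρ₁ := by
            rw [show γ₃ - t = (γ₃ - c₁) - (t - c₁) by ring]
            exact (Stmt10.umax_sub _ _).trans (max_le hγ₃B₁ ht)
          have e6 : (1/2 : ℝ) * ρ₁ = ρ₂ := by rw [hρ₁def, hρ₂def]; ring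
          calc (1/2 : ℝ) * ‖γ₃ - t‖ ≤ (1/2) * ρ₁ := by linarith
          _ = ρ₂ := e6
        · rw [norm_mul, norm_mul, htn, norm_sub_rev, hγ₂ρ]
          have g1 : (1/q) * ‖β' - b₁‖ * ρ₁ ≤ 1 * ρ₂ * 1 :=
            mul_le_mul (mul_le_mul h1q1.le hb'.le (norm_nonneg _) (by norm_num))
              hρ₁1.le hρ₁0.le (by positivity)
          linarith
      have hsum : ‖1 + t*β' - 2*γ₂‖ = 1 := by
        rw [show (1 : K) + t*β' - 2*γ₂ = 1 + (t*β' - 2*γ₂) by ring,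
          Stmt10.ueq ?_, norm_one]
        rw [norm_one]
        refine lt_of_le_of_lt (Stmt10.umax_sub _ _) (max_lt ?_ ?_)
        · rw [norm_mul, htn, hβ'n, mul_one]; linarith [h1q1]
        · rw [norm_mul, h2, hγ₂ρ]; linarith [hρ₁1, hρ₁0]
      have hden : ∀ z : K, ‖z - γ₂‖ ≤ ρ₂ → β'*z - 1/a ≠ 0 := by
        intro z hzc
        have hzn : ‖z‖ = ρ₁ := by
          rw [Stmt10.unorm_eq (c := γ₂) (by rw [hγ₂ρ]; exact lt_of_le_of_lt hzc hρ₂₁), hγ₂ρ]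
        refine hne0 _ (1/2) ?_ (by norm_num)
        rw [Stmt10.ueq_sub' (by rw [norm_mul, hβ'n, one_mul, hzn, hai]; exact hρ₁half)]
        exact hai
      obtain ⟨z, hzb, hgz⟩ := Stmt10.sur2 h2K β' γ₂ t (1/a) hprod hsum hρ₂1 hden
      exact ⟨z, by rw [Metric.mem_closedBall, dist_eq_norm]; exact hzb,
        by rw [hRdef]; exact hgz⟩
  rw [hiter (R β), step1 β hβε, step2 β hβε, step3 β hβε]
end

section
/- For every β ∈ K with ‖β − b₁‖ < 1/(4√2), every preimage w of 1 under R_β (i.e. every root w of z² − (1+β)z + 1/a) and every preimage w' of 1 under R_{b₁} (i.e. every root w' of z² − (1+b₁)z + 1/a) satisfy ‖w − w'‖ ≤ 1/(2√2). -/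
section AuxUltra

variable {K : Type*} [NormedField K] [IsUltrametricDist K]

lemma nadd (x y : K) : ‖x + y‖ ≤ max ‖x‖ ‖y‖ := IsUltrametricDist.norm_add_le_max x y

lemma ndom {x y : K} (h : ‖y‖ < ‖x‖) : ‖x + y‖ = ‖x‖ := by
  rw [IsUltrametricDist.norm_add_eq_max_of_norm_ne_norm (ne_of_gt h)]
  exact max_eq_left h.le

lemma nsub (x y : K) : ‖x - y‖ ≤ max ‖x‖ ‖y‖ := by
  rw [sub_eq_add_neg]; simpa using nadd x (-y)

lemma ndom' {x y : K} (h : ‖y‖ < ‖x‖) : ‖x - y‖ = ‖x‖ := by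
  rw [sub_eq_add_neg]; exact ndom (by simpa using h)

set_option maxHeartbeats 2000000 in
lemma key [IsAlgClosed K] (h2 : ‖(2 : K)‖ = 1 / 2)
    (a b₁ c₁ : K) (ha : ‖a‖ = 2) (hb₁ : ‖b₁‖ = 1)
    (R : K → K → K) (hRdef : ∀ β z, R β z = (z ^ 2 - z) / (β * z - 1 / a))
    (hc₁ : b₁ * c₁ ^ 2 - (2 / a) * c₁ + 1 / a = 0)
    (hper : (R b₁)^[3] '' Metric.closedBall c₁ (1 / (2 * Real.sqrt 2)) =
      Metric.closedBall c₁ (1 / (2 * Real.sqrt 2))) :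
    ‖1 + b₁‖ ≤ 1 / (2 * Real.sqrt 2) := by
  set s := Real.sqrt 2 with hs
  have hs2 : s * s = 2 := Real.mul_self_sqrt (by norm_num)
  have hs0 : 0 < s := Real.sqrt_pos.mpr (by norm_num)
  have hs1 : 1 < s := by nlinarith
  have hs4 : s < 2 := by nlinarith
  set σ : ℝ := 1/s with hσ
  have hσ2 : σ * σ = 1/2 := by rw [hσ, div_mul_div_comm, hs2]; norm_num
  have hσa : 1/2 < σ := by rw [hσ, lt_div_iff₀ hs0]; linarith
  have hσb : σ < 1 := by rw [hσ, div_lt_one hs0]; exact hs1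
  have hσ0 : 0 < σ := by linarith
  set r : ℝ := 1/(2*s) with hrdef
  have hrσ : r = σ/2 := by rw [hrdef, hσ]; ring
  have hr0 : 0 < r := by rw [hrσ]; linarith
  have hrσlt : r < σ := by rw [hrσ]; linarith
  have hr1 : r < 1/2 := by rw [hrσ]; linarith
  have hanz : a ≠ 0 := by intro h; rw [h, norm_zero] at ha; norm_num at ha
  have hbnz : b₁ ≠ 0 := by intro h; rw [h, norm_zero] at hb₁; norm_num at hb₁
  have hea : ‖1/a‖ = 1/2 := by rw [norm_div, norm_one, ha]
  have h2a : ‖2/a‖ = 1/4 := by rw [norm_div, h2, ha]; norm_num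
  have hmulb : ∀ x : K, ‖b₁ * x‖ = ‖x‖ := fun x => by rw [norm_mul, hb₁, one_mul]
  -- ‖c₁‖ = σ
  have hcnorm : ‖c₁‖ = σ := by
    have e1 : b₁ * c₁^2 = (2/a)*c₁ - 1/a := by linear_combination hc₁
    have e2 : ‖b₁ * c₁^2‖ = ‖c₁‖ * ‖c₁‖ := by rw [hmulb, pow_two, norm_mul]
    rcases lt_trichotomy ‖c₁‖ σ with h|h|h
    · exfalso
      have hlt : ‖(2/a)*c₁‖ < ‖1/a‖ := by
        rw [norm_mul, h2a, hea]; nlinarith [norm_nonneg c₁]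
      have e3 : ‖(2/a)*c₁ - 1/a‖ = 1/2 := by
        rw [show (2/a)*c₁ - 1/a = -(1/a - (2/a)*c₁) by ring, norm_neg, ndom' (hea ▸ hlt), hea]
      rw [e1, e3] at e2
      nlinarith [norm_nonneg c₁, mul_lt_mul' h.le h (norm_nonneg c₁) hσ0]
    · exact h
    · exfalso
      have e3 : ‖(2/a)*c₁ - 1/a‖ ≤ max (1/4 * ‖c₁‖) (1/2) := by
        calc ‖(2/a)*c₁ - 1/a‖ ≤ max ‖(2/a)*c₁‖ ‖1/a‖ := nsub _ _
        _ ≤ _ := by rw [norm_mul, h2a, hea]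
      rw [e1] at e2
      have hq : σ * σ < ‖c₁‖ * ‖c₁‖ := mul_lt_mul' h.le h hσ0.le (by linarith)
      rcases max_cases (1/4 * ‖c₁‖) (1/2) with ⟨hm,_⟩|⟨hm,_⟩ <;> rw [hm] at e3 <;> nlinarith
  have hcnz : c₁ ≠ 0 := by
    intro h; rw [h, norm_zero] at hcnorm; linarith
  -- ‖b₁ c₁ - 1/a‖ = σ
  have hc1m : ‖c₁ - 1‖ = 1 := by
    rw [show c₁ - 1 = -(1 - c₁) by ring, norm_neg,
      ndom' (by rw [norm_one, hcnorm]; exact hσb), norm_one]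
  have hbc : ‖b₁*c₁ - 1/a‖ = σ := by
    have e4 : c₁ * (b₁*c₁ - 1/a) = (1/a)*(c₁-1) := by linear_combination hc₁
    have e5 : σ * ‖b₁*c₁ - 1/a‖ = 1/2 := by
      rw [← hcnorm, ← norm_mul, e4, norm_mul, hea, hc1m]; ring
    have : σ * ‖b₁*c₁ - 1/a‖ = σ * σ := by rw [e5, hσ2]
    exact mul_left_cancel₀ (ne_of_gt hσ0) this
  have hbcnz : b₁*c₁ - 1/a ≠ 0 := by
    intro h; rw [h, norm_zero] at hbc; linarith
  -- y₁ = R c₁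
  set y₁ : K := (2*c₁ - 1)/b₁ with hy₁def
  have hy1 : R b₁ c₁ = y₁ := by
    rw [hRdef, hy₁def, div_eq_div_iff hbcnz hbnz]
    linear_combination -hc₁
  have h2c : ‖2*c₁‖ = r := by rw [norm_mul, h2, hcnorm, hrσ]; ring
  have h2c1 : ‖2*c₁ - 1‖ = 1 := by
    rw [show 2*c₁ - 1 = -(1 - 2*c₁) by ring, norm_neg,
      ndom' (by rw [norm_one, h2c]; linarith), norm_one]
  have hy1n : ‖y₁‖ = 1 := by rw [hy₁def, norm_div, h2c1, hb₁]; norm_num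
  have hb1y1 : b₁ * y₁ = 2*c₁ - 1 := by rw [hy₁def, mul_comm, div_mul_cancel₀ _ hbnz]
  have hone_e : ‖1 + 1/a‖ = 1 := by
    rw [ndom (by rw [norm_one, hea]; norm_num), norm_one]
  have hd1 : ‖b₁*y₁ - 1/a‖ = 1 := by
    rw [show b₁*y₁ - 1/a = -(1+1/a) + 2*c₁ by rw [hb1y1]; ring,
      ndom (by rw [norm_neg, hone_e, h2c]; linarith), norm_neg, hone_e]
  have hd1nz : b₁*y₁ - 1/a ≠ 0 := by intro h; rw [h, norm_zero] at hd1; linarith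
  -- main contradiction argument
  by_contra hcon
  push_neg at hcon
  have hT : r < ‖1 + b₁‖ := hcon
  have hT1 : ‖1 + b₁‖ ≤ 1 := by
    have := nadd (1:K) b₁; rw [norm_one, hb₁] at this; simpa using this
  have hT0 : 0 < ‖1 + b₁‖ := lt_trans hr0 hT
  -- y₁ - 1
  have hy1m : ‖y₁ - 1‖ = ‖1 + b₁‖ := by
    have e : y₁ - 1 = (-(1+b₁) + 2*c₁)/b₁ := by
      rw [hy₁def, div_sub' hbnz]; ring_nf
    rw [e, norm_div, hb₁, div_one, ndom (by rw [norm_neg, h2c]; exact hT), norm_neg]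
  -- ball membership facts
  have hmem : ∀ x : K, x ∈ Metric.closedBall c₁ (1/(2*s)) ↔ ‖x - c₁‖ ≤ r := by
    intro x; rw [Metric.mem_closedBall, dist_eq_norm]
  have hc₁B : c₁ ∈ Metric.closedBall c₁ (1/(2*s)) :=
    Metric.mem_closedBall_self (by positivity)
  have hiter : ∀ x : K, (R b₁)^[3] x = R b₁ (R b₁ (R b₁ x)) := fun x => rfl
  rcases lt_or_eq_of_le hT1 with hlt | heq
  -- CASE A : ‖1+b₁‖ < 1 : the orbit of c₁ escapes the ball
  · set y₂ : K := R b₁ y₁ with hy₂def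
    have hy₂n : ‖y₂‖ = ‖1 + b₁‖ := by
      rw [hy₂def, hRdef, norm_div, hd1, div_one,
        show y₁^2 - y₁ = y₁*(y₁-1) by ring, norm_mul, hy1n, hy1m, one_mul]
    set y₃ : K := R b₁ y₂ with hy₃def
    have hy₃B : ‖y₃ - c₁‖ ≤ r := by
      have h1 : (R b₁)^[3] c₁ ∈ Metric.closedBall c₁ (1/(2*s)) := by
        rw [← hper]; exact Set.mem_image_of_mem _ hc₁B
      rw [hmem] at h1
      rwa [hiter, hy1] at h1
    have hy₃n : ‖y₃‖ = σ := by
      rw [show y₃ = c₁ + (y₃ - c₁) by ring, ndom (by rw [hcnorm]; linarith), hcnorm]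
    -- now compute ‖y₃‖ directly
    have hy₂m : ‖y₂ - 1‖ = 1 := by
      rw [show y₂ - 1 = -(1 - y₂) by ring, norm_neg,
        ndom' (by rw [norm_one, hy₂n]; exact hlt), norm_one]
    have hnum : ‖y₂^2 - y₂‖ = ‖1 + b₁‖ := by
      rw [show y₂^2 - y₂ = y₂*(y₂-1) by ring, norm_mul, hy₂n, hy₂m, mul_one]
    by_cases hd2 : b₁*y₂ - 1/a = 0
    · rw [hy₃def, hRdef, hd2, div_zero, norm_zero] at hy₃n; linarith
    · have hd2pos : 0 < ‖b₁*y₂ - 1/a‖ := norm_pos_iff.mpr hd2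
      have hd2le : ‖b₁*y₂ - 1/a‖ ≤ max ‖1+b₁‖ (1/2) := by
        calc ‖b₁*y₂ - 1/a‖ ≤ max ‖b₁*y₂‖ ‖1/a‖ := nsub _ _
        _ ≤ _ := by rw [hmulb, hy₂n, hea]
      have e6 : σ * ‖b₁*y₂ - 1/a‖ = ‖1+b₁‖ := by
        have : ‖y₃‖ = ‖1+b₁‖ / ‖b₁*y₂ - 1/a‖ := by
          rw [hy₃def, hRdef, norm_div, hnum]
        rw [hy₃n, eq_div_iff (ne_of_gt hd2pos)] at this
        linarith [this]
      rcases max_cases ‖1+b₁‖ (1/2) with ⟨hm,_⟩|⟨hm,_⟩ <;> rw [hm] at hd2le <;> nlinarith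
  -- CASE B : ‖1+b₁‖ = 1 : R^3 contracts the ball by factor 2
  · have hdiff : ∀ x y : K, b₁*x - 1/a ≠ 0 → b₁*y - 1/a ≠ 0 →
        R b₁ x - R b₁ y
          = ((x-y) * (b₁*x*y - (1/a)*(x+y) + 1/a)) / ((b₁*x - 1/a)*(b₁*y - 1/a)) := by
      intro x y hx hy
      rw [hRdef, hRdef, div_sub_div _ _ hx hy]
      congr 1
      ring
    have hDB : ∀ x : K, ‖x - c₁‖ ≤ r → ‖b₁*x - 1/a‖ = σ := by
      intro x hx
      rw [show b₁*x - 1/a = (b₁*c₁ - 1/a) + b₁*(x - c₁) by ring,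
        ndom (by rw [hmulb, hbc]; linarith), hbc]
    have hDBnz : ∀ x : K, ‖x - c₁‖ ≤ r → b₁*x - 1/a ≠ 0 := by
      intro x hx h
      have := hDB x hx
      rw [h, norm_zero] at this
      linarith
    have hfac1 : ∀ x y : K, ‖x-c₁‖ ≤ r → ‖y-c₁‖ ≤ r →
        ‖b₁*x*y - (1/a)*(x+y) + 1/a‖ ≤ 1/4 := by
      intro x y hx hy
      have e : b₁*x*y - (1/a)*(x+y) + 1/a
          = ((b₁*c₁ - 1/a)*((x-c₁)+(y-c₁)) + b₁*((x-c₁)*(y-c₁)))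
            + (b₁*c₁^2 - (2/a)*c₁ + 1/a) := by ring
      rw [e, hc₁, add_zero]
      refine (nadd _ _).trans (max_le ?_ ?_)
      · rw [norm_mul, hbc]
        have h1 : ‖(x-c₁)+(y-c₁)‖ ≤ r := (nadd _ _).trans (max_le hx hy)
        have h2' : σ * ‖(x-c₁)+(y-c₁)‖ ≤ σ * r := by
          exact mul_le_mul_of_nonneg_left h1 hσ0.le
        have : σ * r = 1/4 := by rw [hrσ]; nlinarith
        linarith
      · rw [hmulb, norm_mul]
        have := mul_le_mul hx hy (norm_nonneg _) hr0.le
        nlinarith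
    have step1 : ∀ x y : K, ‖x-c₁‖ ≤ r → ‖y-c₁‖ ≤ r →
        ‖R b₁ x - R b₁ y‖ ≤ 1/2 * ‖x-y‖ := by
      intro x y hx hy
      rw [hdiff x y (hDBnz x hx) (hDBnz y hy), norm_div, norm_mul, norm_mul,
        hDB x hx, hDB y hy, hσ2]
      have hf := hfac1 x y hx hy
      have h0 : (0:ℝ) ≤ ‖x-y‖ := norm_nonneg _
      have h1 : ‖x-y‖ * ‖b₁*x*y - (1/a)*(x+y) + 1/a‖ ≤ ‖x-y‖ * (1/4) :=
        mul_le_mul_of_nonneg_left hf h0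
      rw [div_le_iff₀ (by norm_num : (0:ℝ) < 1/2)]
      nlinarith
    have step1' : ∀ x : K, ‖x-c₁‖ ≤ r → ‖R b₁ x - y₁‖ ≤ r/2 := by
      intro x hx
      have h := step1 x c₁ hx (by simp [hr0.le])
      rw [hy1] at h
      have : ‖x - c₁‖ ≤ r := hx
      nlinarith [norm_nonneg (x - c₁)]
    have hrhalf : r/2 < 1 := by linarith
    have hB₁n : ∀ u : K, ‖u - y₁‖ ≤ r/2 → ‖u‖ = 1 := by
      intro u hu
      rw [show u = y₁ + (u - y₁) by ring, ndom (by rw [hy1n]; linarith), hy1n]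
    have hB₁D : ∀ u : K, ‖u - y₁‖ ≤ r/2 → ‖b₁*u - 1/a‖ = 1 := by
      intro u hu
      rw [show b₁*u - 1/a = (b₁*y₁ - 1/a) + b₁*(u - y₁) by ring,
        ndom (by rw [hmulb, hd1]; linarith), hd1]
    have hB₁m : ∀ u : K, ‖u - y₁‖ ≤ r/2 → ‖u - 1‖ = 1 := by
      intro u hu
      rw [show u - 1 = (y₁ - 1) + (u - y₁) by ring,
        ndom (by rw [hy1m, heq]; linarith), hy1m, heq]
    have lip1 : ∀ u v : K, ‖u‖ ≤ 1 → ‖v‖ ≤ 1 → ‖b₁*u - 1/a‖ = 1 → ‖b₁*v - 1/a‖ = 1 →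
        ‖R b₁ u - R b₁ v‖ ≤ ‖u - v‖ := by
      intro u v hun hvn hud hvd
      have hudnz : b₁*u - 1/a ≠ 0 := by intro h; rw [h, norm_zero] at hud; linarith
      have hvdnz : b₁*v - 1/a ≠ 0 := by intro h; rw [h, norm_zero] at hvd; linarith
      rw [hdiff u v hudnz hvdnz, norm_div, norm_mul, norm_mul, hud, hvd, mul_one,
        div_one]
      have hf : ‖b₁*u*v - (1/a)*(u+v) + 1/a‖ ≤ 1 := by
        refine (nadd _ _).trans (max_le ((nsub _ _).trans (max_le ?_ ?_)) ?_)
        · rw [show b₁*u*v = b₁*(u*v) by ring, hmulb, norm_mul]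
          exact mul_le_one₀ hun (norm_nonneg _) hvn
        · rw [norm_mul, hea]
          have : ‖u + v‖ ≤ 1 := (nadd _ _).trans (max_le hun hvn)
          nlinarith [norm_nonneg (u+v)]
        · rw [hea]; norm_num
      nlinarith [norm_nonneg (u-v), mul_le_mul_of_nonneg_left hf (norm_nonneg (u-v))]
    have hRB₁ : ∀ u : K, ‖u - y₁‖ ≤ r/2 → ‖R b₁ u‖ = 1 := by
      intro u hu
      rw [hRdef, norm_div, hB₁D u hu, div_one, show u^2 - u = u*(u-1) by ring,
        norm_mul, hB₁n u hu, hB₁m u hu, mul_one]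
    have hDv : ∀ v : K, ‖v‖ = 1 → ‖b₁*v - 1/a‖ = 1 := by
      intro v hv
      rw [ndom' (by rw [hmulb, hv, hea]; norm_num), hmulb, hv]
    -- cube root of unity
    obtain ⟨ω, hω⟩ : ∃ ω : K, ω^2 + ω + 1 = 0 := by
      have hdeg : (Polynomial.X^2 + Polynomial.X + Polynomial.C (1:K)).degree = 2 := by
        compute_degree!
      obtain ⟨ω, hω⟩ := IsAlgClosed.exists_root
        (Polynomial.X^2 + Polynomial.X + Polynomial.C (1:K)) (by rw [hdeg]; simp)
      refine ⟨ω, ?_⟩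
      have := hω
      simpa [Polynomial.IsRoot] using this
    have hωn : ‖ω‖ = 1 := by
      have hω3 : ω^3 = 1 := by linear_combination (ω - 1) * hω
      have h3 : ‖ω‖^3 = 1 := by rw [← norm_pow, hω3, norm_one]
      nlinarith [norm_nonneg ω, sq_nonneg (‖ω‖ - 1), sq_nonneg (‖ω‖ + 1)]
    have h3n : ‖(3:K)‖ = 1 := by
      rw [show (3:K) = 1 + 2 by norm_num, ndom (by rw [norm_one, h2]; norm_num), norm_one]
    have h1ω : ‖1 - ω‖ = 1 := by
      have hp : (1 - ω)*(2 + ω) = 3 := by linear_combination -hω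
      have h1 : ‖1-ω‖ * ‖2+ω‖ = 1 := by rw [← norm_mul, hp, h3n]
      have ha2 : ‖1-ω‖ ≤ 1 := (nsub 1 ω).trans (by rw [norm_one, hωn]; norm_num)
      have ha3 : ‖2+ω‖ ≤ 1 := (nadd 2 ω).trans (by rw [h2, hωn]; norm_num)
      nlinarith [norm_nonneg (1-ω), norm_nonneg (2+ω)]
    -- two far-apart points in the ball, both in the image
    have hx₀B : c₁ + 2*c₁ ∈ Metric.closedBall c₁ (1/(2*s)) := by
      rw [hmem, show c₁ + 2*c₁ - c₁ = 2*c₁ by ring, h2c]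
    have hx₁B : c₁ + 2*ω*c₁ ∈ Metric.closedBall c₁ (1/(2*s)) := by
      rw [hmem, show c₁ + 2*ω*c₁ - c₁ = ω*(2*c₁) by ring, norm_mul, hωn, one_mul, h2c]
    rw [← hper] at hx₀B hx₁B
    obtain ⟨p₀, hp₀B, hp₀⟩ := hx₀B
    obtain ⟨p₁, hp₁B, hp₁⟩ := hx₁B
    rw [hmem] at hp₀B hp₁B
    have chain : ∀ p q : K, ‖p - c₁‖ ≤ r → ‖q - c₁‖ ≤ r →
        ‖(R b₁)^[3] p - (R b₁)^[3] q‖ ≤ r/2 := by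
      intro p q hp hq
      have h1p := step1' p hp
      have h1q := step1' q hq
      have huv : ‖R b₁ p - R b₁ q‖ ≤ r/2 := by
        rw [show R b₁ p - R b₁ q = (R b₁ p - y₁) - (R b₁ q - y₁) by ring]
        exact (nsub _ _).trans (max_le h1p h1q)
      have h2' : ‖R b₁ (R b₁ p) - R b₁ (R b₁ q)‖ ≤ r/2 :=
        (lip1 _ _ (le_of_eq (hB₁n _ h1p)) (le_of_eq (hB₁n _ h1q))
          (hB₁D _ h1p) (hB₁D _ h1q)).trans huv
      have h3' : ‖R b₁ (R b₁ (R b₁ p)) - R b₁ (R b₁ (R b₁ q))‖ ≤ r/2 :=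
        (lip1 _ _ (le_of_eq (hRB₁ _ h1p)) (le_of_eq (hRB₁ _ h1q))
          (hDv _ (hRB₁ _ h1p)) (hDv _ (hRB₁ _ h1q))).trans h2'
      rw [hiter, hiter]
      exact h3'
    have hfar : ‖(c₁ + 2*c₁) - (c₁ + 2*ω*c₁)‖ = r := by
      rw [show (c₁ + 2*c₁) - (c₁ + 2*ω*c₁) = (1-ω)*(2*c₁) by ring, norm_mul, h1ω,
        one_mul, h2c]
    have := chain p₀ p₁ hp₀B hp₁B
    rw [hp₀, hp₁, hfar] at this
    linarith

end AuxUltra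

set_option maxHeartbeats 2000000

/-- For every `β` with `‖β − b₁‖ < 1/(4√2)`, every preimage `w` of `1`
under `R_β` (root of `z² − (1+β)z + 1/a`) and every preimage `w'` of `1` under `R_{b₁}`
(root of `z² − (1+b₁)z + 1/a`) satisfy `‖w − w'‖ ≤ 1/(2√2)`. -/
theorem preimages_of_one_stay_close
    {K : Type*} [NormedField K] [CompleteSpace K] [IsAlgClosed K] [IsUltrametricDist K]
    (h2 : ‖(2 : K)‖ = 1 / 2)
    (a b₁ c₁ : K) (ha : ‖a‖ = 2) (hb₁ : ‖b₁‖ = 1)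
    (R : K → K → K) (hRdef : ∀ β z, R β z = (z ^ 2 - z) / (β * z - 1 / a))
    (hc₁ : b₁ * c₁ ^ 2 - (2 / a) * c₁ + 1 / a = 0)
    (hper : (R b₁)^[3] '' Metric.closedBall c₁ (1 / (2 * Real.sqrt 2)) =
      Metric.closedBall c₁ (1 / (2 * Real.sqrt 2))) :
    ∀ β w w' : K, ‖β - b₁‖ < 1 / (4 * Real.sqrt 2) →
      w ^ 2 - (1 + β) * w + 1 / a = 0 →
      w' ^ 2 - (1 + b₁) * w' + 1 / a = 0 →
      ‖w - w'‖ ≤ 1 / (2 * Real.sqrt 2) := by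
  have hkey := key h2 a b₁ c₁ ha hb₁ R hRdef hc₁ hper
  intro β w w' hβ hw hw'
  set s := Real.sqrt 2 with hs
  have hs2 : s * s = 2 := Real.mul_self_sqrt (by norm_num)
  have hs0 : 0 < s := Real.sqrt_pos.mpr (by norm_num)
  have hs1 : 1 < s := by nlinarith
  have hs4 : s < 2 := by nlinarith
  set σ : ℝ := 1/s with hσ
  have hσ2 : σ * σ = 1/2 := by rw [hσ, div_mul_div_comm, hs2]; norm_num
  have hσa : 1/2 < σ := by rw [hσ, lt_div_iff₀ hs0]; linarith
  have hσb : σ < 1 := by rw [hσ, div_lt_one hs0]; exact hs1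
  have hσ0 : 0 < σ := by linarith
  set r : ℝ := 1/(2*s) with hrdef
  have hrσ : r = σ/2 := by rw [hrdef, hσ]; ring
  have hr0 : 0 < r := by rw [hrσ]; linarith
  have hrσlt : r < σ := by rw [hrσ]; linarith
  have hrr : r * r = 1/8 := by
    rw [hrdef]; rw [div_mul_div_comm]; rw [show 2*s*(2*s) = 4*(s*s) by ring, hs2]; norm_num
  have hrhalf : (1:ℝ)/(4*s) = r/2 := by rw [hrdef]; ring
  have hanz : a ≠ 0 := by intro h; rw [h, norm_zero] at ha; norm_num at ha
  have hea : ‖1/a‖ = 1/2 := by rw [norm_div, norm_one, ha]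
  have h4e : ‖4*(1/a)‖ = 1/8 := by
    rw [norm_mul, show (4:K) = 2*2 by norm_num, norm_mul, h2, hea]; norm_num
  -- any root of z² - (1+γ)z + 1/a with ‖1+γ‖ ≤ r has ‖z‖ ≤ σ
  have root_le : ∀ γ z : K, ‖1+γ‖ ≤ r → z^2 - (1+γ)*z + 1/a = 0 → ‖z‖ ≤ σ := by
    intro γ z hγ hz
    by_contra h
    push_neg at h
    have e : z^2 = (1+γ)*z - 1/a := by linear_combination hz
    have e2 : ‖z^2‖ = ‖z‖ * ‖z‖ := by rw [pow_two, norm_mul]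
    have e3 : ‖(1+γ)*z - 1/a‖ ≤ max (r * ‖z‖) (1/2) := by
      refine (nsub _ _).trans (max_le ?_ ?_)
      · rw [norm_mul]
        exact le_max_of_le_left (mul_le_mul_of_nonneg_right hγ (norm_nonneg z))
      · rw [hea]
        exact le_max_right _ _
    rw [← e, e2] at e3
    rcases max_cases (r * ‖z‖) ((1:ℝ)/2) with ⟨hm,_⟩|⟨hm,_⟩ <;> rw [hm] at e3 <;>
      nlinarith [norm_nonneg z, mul_lt_mul' h.le h hσ0.le (by linarith : (0:ℝ) < ‖z‖)]
  have hβnorm : ‖1+β‖ ≤ r := by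
    rw [show (1:K)+β = (1+b₁) + (β - b₁) by ring]
    exact (nadd _ _).trans (max_le hkey (by linarith [hβ, hrhalf ▸ hβ]))
  have hwn : ‖w‖ ≤ σ := root_le β w hβnorm hw
  set w₂ : K := (1+b₁) - w' with hw₂def
  have hprod : (w - w')*(w - w₂) = (β - b₁)*w := by
    rw [hw₂def]; linear_combination hw - hw'
  have hβr : ‖β - b₁‖ < r/2 := by rw [← hrhalf]; exact hβ
  have hnp : ‖w-w'‖ * ‖w-w₂‖ < 1/8 := by
    have h1 : ‖(w-w')*(w-w₂)‖ = ‖β-b₁‖*‖w‖ := by rw [hprod, norm_mul]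
    rw [← norm_mul, h1]
    have h2' : ‖β-b₁‖*‖w‖ ≤ ‖β-b₁‖*σ := mul_le_mul_of_nonneg_left hwn (norm_nonneg _)
    have h3' : ‖β-b₁‖*σ < (r/2)*σ := mul_lt_mul_of_pos_right hβr hσ0
    have h4' : (r/2)*σ = 1/8 := by rw [hrσ]; nlinarith
    linarith
  have hsq : ‖w' - w₂‖ ≤ r := by
    have e : (w' - w₂)^2 = (1+b₁)^2 - 4*(1/a) := by
      rw [hw₂def]; linear_combination 4*hw'
    have e2 : ‖(w'-w₂)^2‖ = ‖w'-w₂‖*‖w'-w₂‖ := by rw [pow_two, norm_mul]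
    have e3 : ‖(1+b₁)^2 - 4*(1/a)‖ ≤ 1/8 := by
      refine (nsub _ _).trans (max_le ?_ (le_of_eq h4e))
      rw [pow_two, norm_mul]
      calc ‖1+b₁‖*‖1+b₁‖ ≤ r*r := by
            exact mul_le_mul hkey hkey (norm_nonneg _) hr0.le
      _ = 1/8 := hrr
    rw [← e, e2] at e3
    nlinarith [norm_nonneg (w' - w₂)]
  rcases le_or_gt ‖w - w'‖ r with h|h
  · exact h
  · exfalso
    have h5 : ‖w - w₂‖ < r := by nlinarith [norm_nonneg (w-w₂), norm_nonneg (w-w')]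
    have h6 : ‖w - w'‖ ≤ r := by
      rw [show w - w' = (w - w₂) + (w₂ - w') by ring]
      refine (nadd _ _).trans (max_le h5.le ?_)
      rw [show w₂ - w' = -(w' - w₂) by ring, norm_neg]
      exact hsq
    linarith
end
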